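/- arXiv:1901.00355 — 5 statements merged into one kernel-verified Lean document; each statement's English description precedes it below -/
import Mathlib

section
/- Let G_{m,n} = S_m □ P_n with diam(G_{m,n}) = n+1, and let f be a radio labeling of G_{m,n} (i.e., |f(u) − f(v)| ≥ n + 2 − d(u,v) for all distinct u, v). Then for any fixed j, the restriction of f to the vertices of the star S_{m(j)} = {(u_1,v_j),…,(u_m,v_j)} has span at least n(m−1) + 1; that is, max over the star minus min over the star is at least n(m−1)+1. -/
/-- The star graph on `m` vertices with center `0`. -/
def starGraph (m : ℕ) : SimpleGraph (Fin m) :=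
  SimpleGraph.fromRel (fun a _ => (a : ℕ) = 0)

/-- The path graph on `n` vertices `0, 1, …, n-1`. -/
def pathGraph' (n : ℕ) : SimpleGraph (Fin n) :=
  SimpleGraph.fromRel (fun a b => (a : ℕ) + 1 = b)

/-- The stacked-book graph `G_{m,n} = S_m □ P_n`. -/
def bookGraph (m n : ℕ) : SimpleGraph (Fin m × Fin n) :=
  (starGraph m).boxProd (pathGraph' n)

/-- `f` is a radio labeling of `G` for diameter `D`:
`|f u - f v| ≥ D + 1 - d(u,v)` for all distinct `u, v`. -/
def IsRadioLabeling {V : Type*} (G : SimpleGraph V) (D : ℕ) (f : V → ℕ) : Prop :=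
  ∀ u v : V, u ≠ v → (D : ℤ) + 1 - G.dist u v ≤ |(f u : ℤ) - (f v : ℤ)|

/-- The span of a labeling: maximum label minus minimum label. -/
noncomputable def span {V : Type*} (f : V → ℕ) : ℕ :=
  sSup (Set.range f) - sInf (Set.range f)

/-- The radio number of the stacked-book graph `G_{m,n}` (whose diameter is `n+1`). -/
noncomputable def rnBook (m n : ℕ) : ℕ :=
  sInf {s | ∃ f : Fin m × Fin n → ℕ, IsRadioLabeling (bookGraph m n) (n + 1) f ∧ span f = s}

/-- If all pairs in a finite set of naturals differ by at least `n`, then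
`max - min ≥ n * (card - 1)`. -/
lemma comb1 (n : ℕ) : ∀ (S : Finset ℕ),
    (∀ a ∈ S, ∀ b ∈ S, a ≠ b → a + n ≤ b ∨ b + n ≤ a) →
    ∀ h : S.Nonempty, S.min' h + n * (S.card - 1) ≤ S.max' h := by
  intro S
  induction S using Finset.strongInduction with
  | _ S ih =>
    intro hpair h
    rcases le_or_gt S.card 1 with hc | hc
    · have hc1 : S.card = 1 := le_antisymm hc (Finset.card_pos.mpr h)
      obtain ⟨a, rfl⟩ := Finset.card_eq_one.mp hc1
      simp
    · set x := S.max' h with hx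
      set S' := S.erase x with hS'
      have hsub : S' ⊂ S := Finset.erase_ssubset (S.max'_mem h)
      have hcard' : S'.card = S.card - 1 := Finset.card_erase_of_mem (S.max'_mem h)
      have hne' : S'.Nonempty := by
        rw [← Finset.card_pos, hcard']; omega
      have hpair' : ∀ a ∈ S', ∀ b ∈ S', a ≠ b → a + n ≤ b ∨ b + n ≤ a := fun a ha b hb =>
        hpair a (Finset.mem_of_mem_erase ha) b (Finset.mem_of_mem_erase hb)
      have IH := ih S' hsub hpair' hne'
      have hmin : S.min' h = S'.min' hne' := by
        apply le_antisymm
        · exact S.min'_le _ (Finset.mem_of_mem_erase (S'.min'_mem hne'))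
        · apply S'.min'_le
          rw [hS', Finset.mem_erase]
          exact ⟨(S.min'_lt_max'_of_card hc).ne, S.min'_mem h⟩
      have hmaxmem : S'.max' hne' ∈ S := Finset.mem_of_mem_erase (S'.max'_mem hne')
      have hmaxlt : S'.max' hne' < x := by
        have hle : S'.max' hne' ≤ x := S.le_max' _ hmaxmem
        have : S'.max' hne' ≠ x := (Finset.mem_erase.mp (S'.max'_mem hne')).1
        omega
      have hgap : S'.max' hne' + n ≤ x := by
        rcases hpair _ hmaxmem _ (S.max'_mem h) hmaxlt.ne with hg | hg
        · exact hg
        · omega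
      have hmul : n * (S.card - 1) = n * (S'.card - 1) + n := by
        have h2 : S.card - 1 = (S'.card - 1) + 1 := by omega
        rw [h2, Nat.mul_succ]
      omega

/-- Refined version: if moreover a distinguished element `c ∈ S` differs from all
others by at least `n + 1`, then `max - min ≥ n * (card - 1) + 1` (for `card ≥ 2`). -/
lemma comb2 (n : ℕ) : ∀ (S : Finset ℕ), 2 ≤ S.card → ∀ c ∈ S,
    (∀ a ∈ S, ∀ b ∈ S, a ≠ b → a + n ≤ b ∨ b + n ≤ a) →
    (∀ a ∈ S, a ≠ c → a + (n + 1) ≤ c ∨ c + (n + 1) ≤ a) →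
    ∀ h : S.Nonempty, S.min' h + n * (S.card - 1) + 1 ≤ S.max' h := by
  intro S
  induction S using Finset.strongInduction with
  | _ S ih =>
    intro hcard c hc hpair hcpair h
    have hminmax : S.min' h < S.max' h := S.min'_lt_max'_of_card hcard
    set x := S.max' h with hx
    set S' := S.erase x with hS'
    have hsub : S' ⊂ S := Finset.erase_ssubset (S.max'_mem h)
    have hcard' : S'.card = S.card - 1 := Finset.card_erase_of_mem (S.max'_mem h)
    have hne' : S'.Nonempty := by rw [← Finset.card_pos, hcard']; omega
    have hpair' : ∀ a ∈ S', ∀ b ∈ S', a ≠ b → a + n ≤ b ∨ b + n ≤ a := fun a ha b hb =>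
      hpair a (Finset.mem_of_mem_erase ha) b (Finset.mem_of_mem_erase hb)
    have hmin : S.min' h = S'.min' hne' := by
      apply le_antisymm
      · exact S.min'_le _ (Finset.mem_of_mem_erase (S'.min'_mem hne'))
      · apply S'.min'_le
        rw [hS', Finset.mem_erase]
        exact ⟨hminmax.ne, S.min'_mem h⟩
    have hmaxmem : S'.max' hne' ∈ S := Finset.mem_of_mem_erase (S'.max'_mem hne')
    have hmaxlt : S'.max' hne' < x := by
      have hle : S'.max' hne' ≤ x := S.le_max' _ hmaxmem
      have : S'.max' hne' ≠ x := (Finset.mem_erase.mp (S'.max'_mem hne')).1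
      omega
    by_cases hcx : c = x
    · -- the special element is the max; use `comb1` on the rest
      have IH := comb1 n S' hpair' hne'
      have hgap : S'.max' hne' + (n + 1) ≤ x := by
        rcases hcpair _ hmaxmem (hcx ▸ hmaxlt.ne) with hg | hg
        · exact hcx ▸ hg
        · rw [← hcx] at hmaxlt; omega
      have hmul : n * (S.card - 1) = n * (S'.card - 1) + n := by
        have h2 : S.card - 1 = (S'.card - 1) + 1 := by omega
        rw [h2, Nat.mul_succ]
      omega
    · -- the special element is not the max
      have hcS' : c ∈ S' := Finset.mem_erase.mpr ⟨hcx, hc⟩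
      rcases le_or_gt S'.card 1 with hc1 | hc1
      · -- S' = {c}, so min' S = c and the pair (c, x) gives the bound
        have hc1' : S'.card = 1 := le_antisymm hc1 (Finset.card_pos.mpr hne')
        have hminc : S'.min' hne' = c :=
          Finset.card_le_one.mp hc1 _ (S'.min'_mem hne') c hcS'
        have hgap : c + (n + 1) ≤ x := by
          have hcx' : x ≠ c := fun hxe => hcx hxe.symm
          rcases hcpair x (S.max'_mem h) hcx' with hg | hg
          · have : c ≤ x := S.le_max' _ hc
            omega
          · exact hg
        have hcardS : S.card = 2 := by omega
        have hmul : n * (S.card - 1) = n := by rw [hcardS]; norm_num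
        omega
      · -- use the induction hypothesis on S'
        have hcpair' : ∀ a ∈ S', a ≠ c → a + (n + 1) ≤ c ∨ c + (n + 1) ≤ a := fun a ha =>
          hcpair a (Finset.mem_of_mem_erase ha)
        have IH := ih S' hsub (by omega) c hcS' hpair' hcpair' hne'
        have hgap : S'.max' hne' + n ≤ x := by
          rcases hpair _ hmaxmem _ (S.max'_mem h) hmaxlt.ne with hg | hg
          · exact hg
          · omega
        have hmul : n * (S.card - 1) = n * (S'.card - 1) + n := by
          have h2 : S.card - 1 = (S'.card - 1) + 1 := by omega
          rw [h2, Nat.mul_succ]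
        omega

theorem star_copy_span (m n : ℕ) (hm : 3 ≤ m) (hn : 2 ≤ n)
    (f : Fin m × Fin n → ℕ)
    (hf : IsRadioLabeling (bookGraph m n) (n + 1) f) (j : Fin n) :
    n * (m - 1) + 1 ≤
      sSup ((fun k : Fin m => f (k, j)) '' Set.univ) -
        sInf ((fun k : Fin m => f (k, j)) '' Set.univ) := by
  set g : Fin m → ℕ := fun k => f (k, j) with hg
  have hm0 : 0 < m := by omega
  set z : Fin m := ⟨0, hm0⟩ with hz
  -- center-leaf adjacency
  have hadj : ∀ k : Fin m, k ≠ z → (bookGraph m n).Adj (z, j) (k, j) := by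
    intro k hk
    rw [bookGraph, SimpleGraph.boxProd_adj]
    left
    refine ⟨?_, rfl⟩
    rw [starGraph, SimpleGraph.fromRel_adj]
    exact ⟨fun he => hk he.symm, Or.inl rfl⟩
  -- distance bounds within a star copy
  have hdist1 : ∀ k : Fin m, k ≠ z → (bookGraph m n).dist (z, j) (k, j) ≤ 1 := by
    intro k hk
    have := SimpleGraph.dist_le ((hadj k hk).toWalk)
    simpa using this
  have hdist2 : ∀ a b : Fin m, a ≠ z → b ≠ z → a ≠ b →
      (bookGraph m n).dist (a, j) (b, j) ≤ 2 := by
    intro a b ha hb hab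
    have := SimpleGraph.dist_le
      (SimpleGraph.Walk.cons ((hadj a ha).symm) ((hadj b hb).toWalk))
    simpa [SimpleGraph.Adj.toWalk] using this
  -- pairwise gap conditions on labels
  have hpairg : ∀ a b : Fin m, a ≠ b → g a + n ≤ g b ∨ g b + n ≤ g a := by
    intro a b hab
    have hne : (a, j) ≠ (b, j) := fun he => hab (congrArg Prod.fst he)
    have hrad := hf (a, j) (b, j) hne
    have hd : ((bookGraph m n).dist (a, j) (b, j) : ℤ) ≤ 2 := by
      by_cases ha : a = z
      · subst ha
        have := hdist1 b (fun he => hab he.symm)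
        exact_mod_cast this.trans (by norm_num)
      · by_cases hb : b = z
        · subst hb
          have h1 := hdist1 a ha
          rw [SimpleGraph.dist_comm] at h1
          exact_mod_cast h1.trans (by norm_num)
        · exact_mod_cast hdist2 a b ha hb hab
    have habs : (n : ℤ) ≤ |(g a : ℤ) - (g b : ℤ)| := by
      have : ((n : ℤ) + 1) + 1 - (bookGraph m n).dist (a, j) (b, j) ≤
          |(f (a, j) : ℤ) - (f (b, j) : ℤ)| := by exact_mod_cast hrad
      calc (n : ℤ) ≤ (n : ℤ) + 1 + 1 - (bookGraph m n).dist (a, j) (b, j) := by omega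
        _ ≤ _ := this
    rcases abs_cases ((g a : ℤ) - (g b : ℤ)) with ⟨he, _⟩ | ⟨he, _⟩ <;>
      rw [he] at habs <;> [right; left] <;> omega
  have hcpairg : ∀ a : Fin m, a ≠ z → g a + (n + 1) ≤ g z ∨ g z + (n + 1) ≤ g a := by
    intro a ha
    have hne : (z, j) ≠ (a, j) := fun he => ha (congrArg Prod.fst he).symm
    have hrad := hf (z, j) (a, j) hne
    have hd : ((bookGraph m n).dist (z, j) (a, j) : ℤ) ≤ 1 := by
      exact_mod_cast hdist1 a ha
    have habs : (n : ℤ) + 1 ≤ |(g z : ℤ) - (g a : ℤ)| := by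
      have : ((n : ℤ) + 1) + 1 - (bookGraph m n).dist (z, j) (a, j) ≤
          |(f (z, j) : ℤ) - (f (a, j) : ℤ)| := by exact_mod_cast hrad
      calc (n : ℤ) + 1 ≤ (n : ℤ) + 1 + 1 - (bookGraph m n).dist (z, j) (a, j) := by omega
        _ ≤ _ := this
    rcases abs_cases ((g z : ℤ) - (g a : ℤ)) with ⟨he, _⟩ | ⟨he, _⟩ <;>
      rw [he] at habs <;> [left; right] <;> omega
  -- g is injective
  have hinj : Function.Injective g := by
    intro a b hab
    by_contra hne
    rcases hpairg a b hne with hlt | hlt <;> omega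
  -- set up the finset of values
  set T : Finset ℕ := Finset.image g Finset.univ with hT
  have hTcoe : (T : Set ℕ) = (fun k : Fin m => f (k, j)) '' Set.univ := by
    rw [hT, Finset.coe_image, Finset.coe_univ]
  have hTcard : T.card = m := by
    rw [hT, Finset.card_image_of_injective _ hinj, Finset.card_univ, Fintype.card_fin]
  have hTne : T.Nonempty := by
    rw [← Finset.card_pos, hTcard]; omega
  have hcz : g z ∈ T := Finset.mem_image.mpr ⟨z, Finset.mem_univ z, rfl⟩
  have hpairT : ∀ a ∈ T, ∀ b ∈ T, a ≠ b → a + n ≤ b ∨ b + n ≤ a := by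
    intro a ha b hb hab
    obtain ⟨ka, _, rfl⟩ := Finset.mem_image.mp ha
    obtain ⟨kb, _, rfl⟩ := Finset.mem_image.mp hb
    exact hpairg ka kb (fun he => hab (congrArg g he))
  have hcpairT : ∀ a ∈ T, a ≠ g z → a + (n + 1) ≤ g z ∨ g z + (n + 1) ≤ a := by
    intro a ha hane
    obtain ⟨ka, _, rfl⟩ := Finset.mem_image.mp ha
    exact hcpairg ka (fun he => hane (congrArg g he))
  have hmain := comb2 n T (by omega) (g z) hcz hpairT hcpairT hTne
  rw [hTcard] at hmain
  have hsup : sSup ((fun k : Fin m => f (k, j)) '' Set.univ) = T.max' hTne := by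
    rw [← hTcoe, hTne.csSup_eq_max']
  have hinf : sInf ((fun k : Fin m => f (k, j)) '' Set.univ) = T.min' hTne := by
    rw [← hTcoe, hTne.csInf_eq_min']
  rw [hsup, hinf]
  omega
end

section
/- Let G_{m,n} = S_m □ P_n with n even, and let f be a radio labeling of G_{m,n}. Let G⁺(i) be the set of vertices of the two stars S_{m(i)}, S_{m(i+n/2)} together with the center vertex w_1 = (u_1, v_{i+n/2+1}) of S_{m(i+n/2+1)} (assuming i + n/2 + 1 ≤ n). Then the span of f restricted to G⁺(i), i.e., max f − min f over these vertices, is at least mn + 3. -/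
/-!
Order the `2m + 1` vertices of `G⁺(i)` by label and write `h = n / 2`. Two of them are at distance
at most `h + 2 - excess`, where the excess of the pair counts the centers `(u₁, v_i)`,
`(u₁, v_{i+h})` among them, plus one if both lie on the same side of level `i`; so consecutive
labels differ by at least `n + 2 - (h + 2 - excess) = h + excess`. Summing the `2m` gaps gives
`span ≥ 2mh + Σ excess = mn + Σ excess`, and `Σ excess ≥ 3`: each center lies in some consecutive
pair, and if the order alternates between level `i` and the rest then, level `i` holding only `m`
of the `2m + 1` vertices, both ends of the order lie off level `i`, so the center on level `i` is
interior and lies in two pairs.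
-/

open Finset

section Sequences

variable {α : Type*} {e : ℕ → α}

def excess (A B P : α → Prop) [DecidablePred A] [DecidablePred B] [DecidablePred P]
    (u v : α) : ℕ :=
  (if A u ∨ A v then 1 else 0) + (if B u ∨ B v then 1 else 0) + (if (P u ↔ P v) then 1 else 0)

lemma sum_excess_eq_card_add_card_add_card (A B P : α → Prop) [DecidablePred A]
    [DecidablePred B] [DecidablePred P] (N : ℕ) :
    ∑ k ∈ range N, excess A B P (e k) (e (k + 1)) =
      #{k ∈ range N | A (e k) ∨ A (e (k + 1))} + #{k ∈ range N | B (e k) ∨ B (e (k + 1))} +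
        #{k ∈ range N | P (e k) ↔ P (e (k + 1))} := by
  simp only [excess, sum_add_distrib, card_filter]

variable {A P : α → Prop} [DecidablePred A] [DecidablePred P]

lemma one_le_card_touching {N p : ℕ} (hN : 0 < N) (hp : p ≤ N) (hA : A (e p)) :
    1 ≤ #{k ∈ range N | A (e k) ∨ A (e (k + 1))} := by
  obtain ⟨k, hk, hAk⟩ : ∃ k < N, A (e k) ∨ A (e (k + 1)) := by
    rcases hp.lt_or_eq with hp | rfl
    · exact ⟨p, hp, Or.inl hA⟩
    · exact ⟨p - 1, by omega, Or.inr (by rwa [Nat.sub_add_cancel hN])⟩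
  exact card_pos.2 ⟨k, mem_filter.2 ⟨mem_range.2 hk, hAk⟩⟩

lemma two_le_card_touching {N p : ℕ} (hp₀ : 0 < p) (hp : p < N) (hA : A (e p)) :
    2 ≤ #{k ∈ range N | A (e k) ∨ A (e (k + 1))} :=
  one_lt_card.2
    ⟨p - 1, mem_filter.2 ⟨mem_range.2 (by omega), Or.inr (by rwa [Nat.sub_add_cancel hp₀])⟩,
      p, mem_filter.2 ⟨mem_range.2 hp, Or.inl hA⟩, by omega⟩

lemma sum_range_two_mul_ite_of_alternating {m : ℕ}
    (halt : ∀ k, k + 1 < 2 * m → ¬(P (e k) ↔ P (e (k + 1)))) :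
    ∑ k ∈ range (2 * m), (if P (e k) then 1 else 0) = m := by
  induction m with
  | zero => simp
  | succ m ih =>
    rw [show 2 * (m + 1) = 2 * m + 1 + 1 by ring, sum_range_succ, sum_range_succ,
      ih fun k hk => halt k (by omega)]
    have := halt (2 * m) (by omega)
    split_ifs <;> tauto

lemma not_endpoints_of_alternating {m : ℕ}
    (halt : ∀ k < 2 * m, ¬(P (e k) ↔ P (e (k + 1))))
    (hcount : #{k ∈ range (2 * m + 1) | P (e k)} = m) : ¬P (e 0) ∧ ¬P (e (2 * m)) := by
  -- Both `e 0, …, e (2m - 1)` and `e 1, …, e (2m)` pair off into `m` alternating pairs.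
  have hfirst := sum_range_two_mul_ite_of_alternating (P := P) (e := e) (m := m)
    fun k hk => halt k (by omega)
  have hlast := sum_range_two_mul_ite_of_alternating (P := P) (e := fun k => e (k + 1)) (m := m)
    fun k hk => halt (k + 1) (by omega)
  rw [card_filter] at hcount
  have hsplit₁ := sum_range_succ (fun k => if P (e k) then 1 else 0) (2 * m)
  have hsplit₀ := sum_range_succ' (fun k => if P (e k) then 1 else 0) (2 * m)
  constructor <;> intro h <;> simp only [h, if_true] at hsplit₀ hsplit₁ <;> omega

lemma three_le_sum_excess {B : α → Prop} [DecidablePred B] {m p q : ℕ}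
    (hcount : #{k ∈ range (2 * m + 1) | P (e k)} = m)
    (hp : p ≤ 2 * m) (hAp : A (e p)) (hPp : P (e p)) (hq : q ≤ 2 * m) (hBq : B (e q)) :
    3 ≤ ∑ k ∈ range (2 * m), excess A B P (e k) (e (k + 1)) := by
  have hm : 0 < m := by
    by_contra! hm
    obtain rfl : m = 0 := by omega
    obtain rfl : p = 0 := by omega
    rw [card_eq_zero, filter_eq_empty_iff] at hcount
    exact hcount (mem_range.2 (by omega)) hPp
  rw [sum_excess_eq_card_add_card_add_card]
  have hB := one_le_card_touching (by omega) hq hBq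
  by_cases hagree : ∃ k < 2 * m, P (e k) ↔ P (e (k + 1))
  · obtain ⟨k, hk, hPk⟩ := hagree
    have hA := one_le_card_touching (by omega) hp hAp
    have hP : 1 ≤ #{k ∈ range (2 * m) | P (e k) ↔ P (e (k + 1))} :=
      card_pos.2 ⟨k, mem_filter.2 ⟨mem_range.2 hk, hPk⟩⟩
    omega
  · obtain ⟨h₀, h₁⟩ :=
      not_endpoints_of_alternating (fun k hk hPk => hagree ⟨k, hk, hPk⟩) hcount
    have hA := two_le_card_touching (N := 2 * m) (A := A) (e := e)
      (Nat.pos_of_ne_zero fun h => h₀ (h ▸ hPp)) (lt_of_le_of_ne hp fun h => h₁ (h ▸ hPp)) hAp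
    omega

end Sequences

lemma Finset.exists_bijOn_range_strictMonoOn {α : Type*} {S : Finset α} (hS : S.Nonempty)
    {f : α → ℕ} (hf : Set.InjOn f S) :
    ∃ e : ℕ → α, Set.BijOn e (range #S) S ∧ StrictMonoOn (f ∘ e) (range #S) := by
  have : Nonempty α := hS.to_subtype.map Subtype.val
  have hfin : (Set.ofPred (· ∈ S.image f)).Finite := (S.image f).finite_toSet
  have hcard : #hfin.toFinset = #S := by
    rw [← card_image_of_injOn hf]
    congr 1
    ext; simp
  have hnth : Set.BijOn (Nat.nth (· ∈ S.image f)) (range #S) (f '' S) := by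
    have := (Nat.nth_injOn hfin).bijOn_image
    rw [Nat.image_nth_Iio_card, hcard] at this
    convert this using 1 <;> ext <;> simp
  refine ⟨Function.invFunOn f S ∘ Nat.nth (· ∈ S.image f),
    (hf.bijOn_image.symm hf.bijOn_image.invOn_invFunOn.symm).comp hnth, ?_⟩
  have hmono : StrictMonoOn (Nat.nth (· ∈ S.image f)) (range #S) := by
    rw [coe_range, ← hcard]
    exact Nat.nth_strictMonoOn hfin
  exact hmono.congr fun k hk => (Function.invFunOn_eq (hnth.mapsTo hk)).symm

lemma Set.BijOn.card_filter_comp {α β : Type*} {e : β → α} {s : Finset β} {t : Finset α}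
    (he : Set.BijOn e s t) (P : α → Prop) [DecidablePred P] :
    #{k ∈ s | P (e k)} = #{x ∈ t | P x} := by
  refine card_nbij e (fun k hk => ?_) (he.injOn.mono (Finset.coe_subset.2 (filter_subset _ _)))
    (fun x hx => ?_)
  · simp only [coe_filter, Set.mem_ofPred_eq] at hk ⊢
    exact ⟨he.mapsTo hk.1, hk.2⟩
  · simp only [coe_filter, Set.mem_ofPred_eq] at hx
    obtain ⟨k, hk, rfl⟩ := he.surjOn hx.1
    exact ⟨k, by simpa using ⟨hk, hx.2⟩, rfl⟩

lemma sum_add_le_of_forall_add_le {g a : ℕ → ℕ} {N : ℕ}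
    (h : ∀ k < N, g k + a k ≤ a (k + 1)) : ∑ k ∈ range N, g k + a 0 ≤ a N := by
  induction N with
  | zero => simp
  | succ N ih =>
    rw [sum_range_succ]
    have := ih fun k hk => h k (by omega)
    have := h N (by omega)
    omega

lemma sub_le_sSup_image_sub_sInf_image {α : Type*} {S : Finset α} {f : α → ℕ} {u v : α}
    (hu : u ∈ S) (hv : v ∈ S) : f v - f u ≤ sSup (f '' S) - sInf (f '' S) :=
  tsub_le_tsub (le_csSup (S.finite_toSet.image f).bddAbove ⟨v, hv, rfl⟩)
    (Nat.sInf_le ⟨u, hu, rfl⟩)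

lemma starGraph_adj {m : ℕ} {a b : Fin m} :
    (starGraph m).Adj a b ↔ a ≠ b ∧ ((a : ℕ) = 0 ∨ (b : ℕ) = 0) :=
  SimpleGraph.fromRel_adj _ a b

lemma starGraph_edist_le_one {m : ℕ} {a b : Fin m} (h : (a : ℕ) = 0 ∨ (b : ℕ) = 0) :
    (starGraph m).edist a b ≤ 1 := by
  rw [SimpleGraph.edist_le_one_iff_adj_or_eq, starGraph_adj]
  tauto

lemma starGraph_edist_le_two {m : ℕ} (a b : Fin m) : (starGraph m).edist a b ≤ 2 :=
  let c : Fin m := ⟨0, a.pos⟩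
  calc (starGraph m).edist a b ≤ (starGraph m).edist a c + (starGraph m).edist c b :=
        (starGraph m).edist_triangle
    _ ≤ 1 + 1 :=
        add_le_add (starGraph_edist_le_one (Or.inr rfl)) (starGraph_edist_le_one (Or.inl rfl))
    _ = 2 := by norm_num

lemma pathGraph'_edist_le_of_add_eq {n : ℕ} (t : ℕ) :
    ∀ {j k : Fin n}, (j : ℕ) + t = k → (pathGraph' n).edist j k ≤ t := by
  induction t with
  | zero => intro j k h; simp [Fin.ext (by simpa using h)]
  | succ t ih =>
    intro j k h
    let j' : Fin n := ⟨j + 1, by omega⟩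
    have hadj : (pathGraph' n).Adj j j' :=
      (SimpleGraph.fromRel_adj _ _ _).2 ⟨by simp [Fin.ext_iff, j'], Or.inl rfl⟩
    calc (pathGraph' n).edist j k ≤ (pathGraph' n).edist j j' + (pathGraph' n).edist j' k :=
          (pathGraph' n).edist_triangle
      _ ≤ 1 + t :=
          add_le_add (SimpleGraph.edist_eq_one_iff_adj.2 hadj).le (ih (by simp [j']; omega))
      _ = (t + 1 : ℕ) := by push_cast; ring

lemma pathGraph'_edist_le {n : ℕ} (j k : Fin n) :
    (pathGraph' n).edist j k ≤ ((j : ℕ) - k + (k - j) : ℕ) := by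
  rcases le_total (j : ℕ) k with h | h
  · exact pathGraph'_edist_le_of_add_eq _ (by omega)
  · rw [SimpleGraph.edist_comm]
    exact pathGraph'_edist_le_of_add_eq _ (by omega)

lemma bookGraph_dist_le {m n s : ℕ} {a b : Fin m} (hs : (starGraph m).edist a b ≤ s)
    (j k : Fin n) : (bookGraph m n).dist (a, j) (b, k) ≤ s + ((j : ℕ) - k + (k - j)) := by
  have h := add_le_add hs (pathGraph'_edist_le j k)
  rw [← SimpleGraph.edist_boxProd (x := (a, j)) (y := (b, k))] at h
  exact ENat.toNat_le_of_le_natCast (by exact_mod_cast h)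

-- `G⁺(i)` of the paper for `h = n / 2`, with the paper's level `v_j` at index `j - 1`.
def gPlus (m n i h : ℕ) : Finset (Fin m × Fin n) :=
  univ.filter (fun p => (p.2 : ℕ) = i ∨ (p.2 : ℕ) = i + h ∨
    ((p.1 : ℕ) = 0 ∧ (p.2 : ℕ) = i + h + 1))

abbrev IsCenterAt {m n : ℕ} (l : ℕ) (p : Fin m × Fin n) : Prop :=
  (p.1 : ℕ) = 0 ∧ (p.2 : ℕ) = l

abbrev gPlusExcess {m n : ℕ} (i h : ℕ) : Fin m × Fin n → Fin m × Fin n → ℕ :=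
  excess (IsCenterAt i) (IsCenterAt (i + h)) (fun p => (p.2 : ℕ) = i)

section GPlus

variable {m n i h : ℕ}

lemma card_gPlus (hm : 0 < m) (hh : 1 ≤ h) (hi : i + h + 1 < n) :
    #(gPlus m n i h) = 2 * m + 1 := by
  have hS : gPlus m n i h =
      (univ ×ˢ {⟨i, by omega⟩, ⟨i + h, by omega⟩}) ∪ {(⟨0, hm⟩, ⟨i + h + 1, hi⟩)} := by
    ext ⟨a, j⟩
    simp only [gPlus, mem_filter, mem_univ, true_and, mem_union, mem_product, mem_insert,
      mem_singleton, Prod.mk.injEq, Fin.ext_iff]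
    omega
  rw [hS, card_union_of_disjoint (by simp [Fin.ext_iff]; omega), card_product,
    card_pair (by simp [Fin.ext_iff]; omega)]
  simp [mul_comm]

lemma card_filter_gPlus_level (hh : 1 ≤ h) (hi : i < n) :
    #{p ∈ gPlus m n i h | (p.2 : ℕ) = i} = m := by
  have hS : {p ∈ gPlus m n i h | (p.2 : ℕ) = i} = univ ×ˢ {⟨i, hi⟩} := by
    ext ⟨a, j⟩
    simp only [gPlus, mem_filter, mem_univ, true_and, mem_product, mem_singleton, Fin.ext_iff]
    omega
  simp [hS]

lemma dist_add_gPlusExcess_le (hh : 1 ≤ h) {u v : Fin m × Fin n}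
    (hu : u ∈ gPlus m n i h) (hv : v ∈ gPlus m n i h) (huv : u ≠ v) :
    (bookGraph m n).dist u v + gPlusExcess i h u v ≤ h + 2 := by
  obtain ⟨a, j⟩ := u
  obtain ⟨b, k⟩ := v
  simp only [gPlus, mem_filter, mem_univ, true_and] at hu hv
  have huv' : ¬((a : ℕ) = b ∧ (j : ℕ) = k) := fun h =>
    huv (by simp [Prod.ext_iff, Fin.ext_iff, h])
  have hd2 := bookGraph_dist_le (s := 2) (starGraph_edist_le_two a b) j k
  have hd1 := fun hab : (a : ℕ) = 0 ∨ (b : ℕ) = 0 =>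
    bookGraph_dist_le (s := 1) (starGraph_edist_le_one hab) j k
  have hd0 := fun hab : (a : ℕ) = b =>
    bookGraph_dist_le (a := a) (b := b) (s := 0) (by simp [Fin.ext hab]) j k
  generalize (bookGraph m n).dist (a, j) (b, k) = d at hd2 hd1 hd0 ⊢
  unfold gPlusExcess excess IsCenterAt
  dsimp only
  rcases hu with hj | hj | ⟨ha, hj⟩ <;> rcases hv with hk | hk | ⟨hb, hk⟩ <;>
    split_ifs <;> omega

lemma three_le_sum_gPlusExcess_of_bijOn (hh : 1 ≤ h) (hi : i + h + 1 < n)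
    {e : ℕ → Fin m × Fin n} (he : Set.BijOn e (range (2 * m + 1)) (gPlus m n i h)) :
    3 ≤ ∑ k ∈ range (2 * m), gPlusExcess i h (e k) (e (k + 1)) := by
  have hm : 0 < m := (e 0).1.pos
  obtain ⟨p, hp, hep⟩ :=
    he.surjOn (show (⟨0, hm⟩, ⟨i, by omega⟩) ∈ gPlus m n i h by simp [gPlus])
  obtain ⟨q, hq, heq⟩ :=
    he.surjOn (show (⟨0, hm⟩, ⟨i + h, by omega⟩) ∈ gPlus m n i h by simp [gPlus])
  have hcount := (he.card_filter_comp (fun p => (p.2 : ℕ) = i)).trans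
    (card_filter_gPlus_level (m := m) hh (by omega))
  exact three_le_sum_excess hcount (p := p) (q := q) (by simpa using hp)
    (by rw [hep]; exact ⟨rfl, rfl⟩) (by rw [hep]) (by simpa using hq)
    (by rw [heq]; exact ⟨rfl, rfl⟩)

variable {f : Fin m × Fin n → ℕ}

lemma IsRadioLabeling.add_gPlusExcess_le_abs_sub
    (hf : IsRadioLabeling (bookGraph m n) (n + 1) f) (hn : n = 2 * h) (hh : 1 ≤ h)
    {u v : Fin m × Fin n} (hu : u ∈ gPlus m n i h) (hv : v ∈ gPlus m n i h) (huv : u ≠ v) :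
    ((h + gPlusExcess i h u v : ℕ) : ℤ) ≤ |(f u : ℤ) - f v| := by
  have hradio := hf u v huv
  have hdist : ((_ + _ : ℕ) : ℤ) ≤ ((h + 2 : ℕ) : ℤ) :=
    Nat.cast_le.2 (dist_add_gPlusExcess_le hh hu hv huv)
  subst hn
  push_cast at hdist hradio ⊢
  linarith

lemma IsRadioLabeling.injOn_gPlus (hf : IsRadioLabeling (bookGraph m n) (n + 1) f)
    (hn : n = 2 * h) (hh : 1 ≤ h) : Set.InjOn f (gPlus m n i h) := by
  intro u hu v hv huv
  by_contra hne
  have := hf.add_gPlusExcess_le_abs_sub hn hh hu hv hne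
  rw [huv, sub_self, abs_zero] at this
  omega

lemma IsRadioLabeling.add_gPlusExcess_add_le
    (hf : IsRadioLabeling (bookGraph m n) (n + 1) f) (hn : n = 2 * h) (hh : 1 ≤ h)
    {u v : Fin m × Fin n} (hu : u ∈ gPlus m n i h) (hv : v ∈ gPlus m n i h) (hlt : f u < f v) :
    h + gPlusExcess i h u v + f u ≤ f v := by
  have := hf.add_gPlusExcess_le_abs_sub hn hh hu hv (by rintro rfl; omega)
  rw [abs_sub_comm, abs_of_pos (by omega)] at this
  omega

end GPlus

theorem Gplus_span_lower_bound (m n : ℕ) (hm : 3 ≤ m) (hn : n % 2 = 0)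
    (i : ℕ) (hi : i + n / 2 + 1 < n)
    (f : Fin m × Fin n → ℕ)
    (hf : IsRadioLabeling (bookGraph m n) (n + 1) f) :
    let S : Finset (Fin m × Fin n) :=
      Finset.univ.filter (fun p => (p.2 : ℕ) = i ∨ (p.2 : ℕ) = i + n / 2 ∨
        ((p.1 : ℕ) = 0 ∧ (p.2 : ℕ) = i + n / 2 + 1))
    m * n + 3 ≤ sSup (f '' ↑S) - sInf (f '' ↑S) := by
  intro S
  change m * n + 3 ≤ sSup (f '' ↑(gPlus m n i (n / 2))) - sInf (f '' ↑(gPlus m n i (n / 2)))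
  have hn2 : n = 2 * (n / 2) := by omega
  have hh : 1 ≤ n / 2 := by omega
  have hcard := card_gPlus (m := m) (by omega) hh hi
  obtain ⟨e, he, hmono⟩ :=
    exists_bijOn_range_strictMonoOn (card_pos.1 (by rw [hcard]; omega)) (hf.injOn_gPlus hn2 hh)
  rw [hcard] at he hmono
  have hrange : ∀ {k}, k ≤ 2 * m → k ∈ (range (2 * m + 1) : Set ℕ) := fun hk => by simp; omega
  have hstep : ∀ k < 2 * m,
      n / 2 + gPlusExcess i (n / 2) (e k) (e (k + 1)) + f (e k) ≤ f (e (k + 1)) :=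
    fun k hk => hf.add_gPlusExcess_add_le hn2 hh (he.mapsTo (hrange hk.le))
      (he.mapsTo (hrange hk)) (hmono (hrange hk.le) (hrange hk) (lt_add_one k))
  have hexcess := three_le_sum_gPlusExcess_of_bijOn hh hi he
  calc m * n + 3 = 2 * m * (n / 2) + 3 := by rw [mul_comm 2 m, mul_assoc, ← hn2]
    _ ≤ ∑ k ∈ range (2 * m), (n / 2 + gPlusExcess i (n / 2) (e k) (e (k + 1))) := by
      rw [sum_add_distrib, sum_const, card_range, smul_eq_mul]
      omega
    _ ≤ f (e (2 * m)) - f (e 0) := by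
      have := sum_add_le_of_forall_add_le hstep
      omega
    _ ≤ _ := sub_le_sSup_image_sub_sInf_image (he.mapsTo (hrange (Nat.zero_le _)))
      (he.mapsTo (hrange le_rfl))
end

section
/- Let G = G_{m,n} = S_m □ P_n with m ≥ 3 and n even. Then the radio number of G satisfies rn(G) ≥ (m n²)/2 + n − 1. -/
/-!
List the `N = m n` vertices as `x₀, …, x_{N-1}` by increasing label. Consecutive labels differ
by at least `n + 2 - d(xₖ, xₖ₊₁)`, so the span is at least `(N - 1)(n + 2) - ∑ₖ d(xₖ, xₖ₊₁)`.
With `n = 2p`, give the vertex `(a, i)` the level `L(a, i)`: the distance from `a` to the center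
of the star plus the distance from `i` to the middle pair `p - 1, p` of the path. Then
`d(u, v) ≤ L u + L v + 1` for all `u, v`, so `∑ₖ d(xₖ, xₖ₊₁) ≤ 2 ∑ L + N - 1` with
`∑ L = n (m - 1) + m p (p - 1)`, and the span is at least `2 m p² + 2 p - 1 = m n² / 2 + n - 1`.
-/

open Finset

lemma sub_le_span {V : Type*} [Finite V] (f : V → ℕ) (u w : V) : (f u : ℤ) - f w ≤ span f := by
  have hmax : f u ≤ sSup (Set.range f) := le_csSup (Set.finite_range f).bddAbove ⟨u, rfl⟩
  have hmin : sInf (Set.range f) ≤ f w := csInf_le (OrderBot.bddBelow _) ⟨w, rfl⟩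
  unfold span
  omega

lemma exists_isRadioLabeling {V : Type*} [Fintype V] (G : SimpleGraph V) (D : ℕ) :
    ∃ f : V → ℕ, IsRadioLabeling G D f := by
  refine ⟨fun v => (D + 1) * Fintype.equivFin V v, fun u v huv => ?_⟩
  have hne : ((Fintype.equivFin V u : ℕ) : ℤ) ≠ Fintype.equivFin V v := by
    exact_mod_cast Fin.val_injective.ne ((Fintype.equivFin V).injective.ne huv)
  push_cast
  rw [← mul_sub, abs_mul, abs_of_nonneg (by positivity)]
  nlinarith [Int.one_le_abs (sub_ne_zero.2 hne)]

lemma Fintype.exists_equiv_fin_monotone {V α : Type*} [Fintype V] [LinearOrder α] (f : V → α)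
    {N : ℕ} (hN : Fintype.card V = N) : ∃ e : Fin N ≃ V, Monotone (f ∘ e) :=
  let e₀ := (Fintype.equivFinOfCardEq hN).symm
  ⟨(Tuple.sort (f ∘ e₀)).trans e₀, Tuple.monotone_sort (f ∘ e₀)⟩

lemma Fin.sum_succ_sub_castSucc {M : Type*} [AddCommGroup M] {n : ℕ} (g : Fin (n + 1) → M) :
    ∑ i : Fin n, (g i.succ - g i.castSucc) = g (Fin.last n) - g 0 := by
  have hsucc : ∑ i : Fin n, g i.succ = ∑ i, g i - g 0 := by rw [Fin.sum_univ_succ]; abel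
  have hcast : ∑ i : Fin n, g i.castSucc = ∑ i, g i - g (Fin.last n) := by
    rw [Fin.sum_univ_castSucc]; abel
  rw [sum_sub_distrib, hsucc, hcast]
  abel

theorem IsRadioLabeling.le_span {V : Type*} [Fintype V] [Nonempty V] {G : SimpleGraph V}
    {D : ℕ} {f : V → ℕ} (hf : IsRadioLabeling G D f) (L : V → ℕ) (c : ℕ)
    (hL : ∀ u v, u ≠ v → G.dist u v ≤ L u + L v + c) :
    ((Fintype.card V : ℤ) - 1) * (D + 1 - c) - 2 * ∑ v, (L v : ℤ) ≤ span f := by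
  obtain ⟨M, hM⟩ : ∃ M, Fintype.card V = M + 1 := Nat.exists_eq_add_one.2 Fintype.card_pos
  obtain ⟨e, he⟩ := Fintype.exists_equiv_fin_monotone f hM
  have hstep (i : Fin M) : ((D : ℤ) + 1 - c) - (L (e i.castSucc) + L (e i.succ)) ≤
      f (e i.succ) - f (e i.castSucc) := by
    have hne : e i.castSucc ≠ e i.succ := e.injective.ne (Fin.castSucc_lt_succ (i := i)).ne
    have hmono : f (e i.castSucc) ≤ f (e i.succ) := he (Fin.castSucc_lt_succ (i := i)).le
    have hrad := hf _ _ hne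
    have hdist := hL _ _ hne
    rw [abs_sub_comm, abs_of_nonneg (by omega)] at hrad
    omega
  have hcast : ∑ i : Fin M, (L (e i.castSucc) : ℤ) ≤ ∑ v, (L v : ℤ) := by
    rw [← e.sum_comp, Fin.sum_univ_castSucc]
    exact le_add_of_nonneg_right (Nat.cast_nonneg _)
  have hsucc : ∑ i : Fin M, (L (e i.succ) : ℤ) ≤ ∑ v, (L v : ℤ) := by
    rw [← e.sum_comp, Fin.sum_univ_succ]
    exact le_add_of_nonneg_left (Nat.cast_nonneg _)
  calc ((Fintype.card V : ℤ) - 1) * (D + 1 - c) - 2 * ∑ v, (L v : ℤ)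
      ≤ ∑ i : Fin M, (((D : ℤ) + 1 - c) - (L (e i.castSucc) + L (e i.succ))) := by
        rw [sum_sub_distrib, sum_add_distrib, sum_const, card_univ, Fintype.card_fin, hM,
          nsmul_eq_mul]
        push_cast
        linarith
    _ ≤ ∑ i : Fin M, ((f (e i.succ) : ℤ) - f (e i.castSucc)) := sum_le_sum fun i _ => hstep i
    _ = f (e (Fin.last M)) - f (e 0) := Fin.sum_succ_sub_castSucc fun j => (f (e j) : ℤ)
    _ ≤ span f := sub_le_span f _ _

def starDepth {m : ℕ} (a : Fin m) : ℕ := if (a : ℕ) = 0 then 0 else 1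

/-- Distance from `i` to the middle pair `p - 1`, `p` of the path on `p + p` vertices. -/
def midDist (p i : ℕ) : ℕ := if i < p then p - 1 - i else i - p

def bookLevel {m : ℕ} (p : ℕ) (x : Fin m × Fin (p + p)) : ℕ := starDepth x.1 + midDist p x.2

lemma starGraph_edist_le {m : ℕ} (a b : Fin m) :
    (starGraph m).edist a b ≤ starDepth a + starDepth b := by
  have hcenter (c : Fin m) : (starGraph m).edist c ⟨0, c.pos⟩ ≤ starDepth c := by
    unfold starDepth
    split_ifs with h
    · simp [show c = ⟨0, c.pos⟩ from Fin.ext h]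
    · refine SimpleGraph.edist_le_one_iff_adj_or_eq.2 (Or.inl ?_)
      simp [starGraph, h, Fin.ext_iff]
  calc (starGraph m).edist a b
      ≤ (starGraph m).edist a ⟨0, a.pos⟩ + (starGraph m).edist ⟨0, a.pos⟩ b :=
        SimpleGraph.edist_triangle
    _ ≤ starDepth a + starDepth b :=
        add_le_add (hcenter a) (SimpleGraph.edist_comm.trans_le (hcenter b))

lemma pathGraph'_edist_le_of_le {n : ℕ} {i j : Fin n} (hij : i ≤ j) :
    (pathGraph' n).edist i j ≤ (j - i : ℕ) := by
  obtain ⟨k, hk⟩ : ∃ k, (j : ℕ) = i + k := ⟨j - i, by omega⟩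
  rw [hk, Nat.add_sub_cancel_left]
  induction k generalizing j with
  | zero => simp [show j = i from Fin.ext hk]
  | succ k ih =>
    let j' : Fin n := ⟨i + k, by omega⟩
    have hadj : (pathGraph' n).Adj j' j := by
      simp only [pathGraph', SimpleGraph.fromRel_adj, ne_eq, Fin.ext_iff, j']
      omega
    calc (pathGraph' n).edist i j ≤ (pathGraph' n).edist i j' + (pathGraph' n).edist j' j :=
          SimpleGraph.edist_triangle
      _ ≤ k + 1 := add_le_add (ih (Fin.le_iff_val_le_val.2 (by simp [j'])) rfl)
          (SimpleGraph.edist_le_one_iff_adj_or_eq.2 (Or.inl hadj))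
      _ = (k + 1 : ℕ) := by push_cast; rfl

lemma pathGraph'_edist_le_midDist {p : ℕ} (i j : Fin (p + p)) :
    (pathGraph' (p + p)).edist i j ≤ midDist p i + midDist p j + 1 := by
  wlog hij : i ≤ j generalizing i j
  · rw [SimpleGraph.edist_comm, add_comm (midDist p i : ℕ∞)]
    exact this j i (le_of_not_ge hij)
  refine (pathGraph'_edist_le_of_le hij).trans ?_
  have : (j - i : ℕ) ≤ midDist p i + midDist p j + 1 := by
    unfold midDist
    split_ifs <;> omega
  exact_mod_cast this

lemma bookGraph_dist_le_s5 {m p : ℕ} (u v : Fin m × Fin (p + p)) :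
    (bookGraph m (p + p)).dist u v ≤ bookLevel p u + bookLevel p v + 1 := by
  apply ENat.toNat_le_of_le_natCast
  rw [bookGraph, SimpleGraph.edist_boxProd]
  calc (starGraph m).edist u.1 v.1 + (pathGraph' (p + p)).edist u.2 v.2
      ≤ (starDepth u.1 + starDepth v.1) + (midDist p u.2 + midDist p v.2 + 1) :=
        add_le_add (starGraph_edist_le _ _) (pathGraph'_edist_le_midDist _ _)
    _ = (bookLevel p u + bookLevel p v + 1 : ℕ) := by
        simp only [bookLevel]
        push_cast
        ring

lemma sum_starDepth (m : ℕ) : ∑ a : Fin m, starDepth a = m - 1 := by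
  cases m with
  | zero => simp
  | succ m => simp [Fin.sum_univ_succ, starDepth]

lemma sum_midDist (p : ℕ) : ∑ i ∈ range (p + p), midDist p i = p * (p - 1) := by
  have hlow : ∑ i ∈ range p, midDist p i = ∑ i ∈ range p, i :=
    (sum_congr rfl fun i hi => if_pos (mem_range.1 hi)).trans (sum_range_reflect id p)
  have hhigh : ∑ i ∈ range p, midDist p (p + i) = ∑ i ∈ range p, i :=
    sum_congr rfl fun i _ => by simp [midDist]
  rw [sum_range_add, hlow, hhigh, ← two_mul, mul_comm, sum_range_id_mul_two]

lemma sum_bookLevel (m p : ℕ) :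
    ∑ x : Fin m × Fin (p + p), bookLevel p x = (p + p) * (m - 1) + m * (p * (p - 1)) := by
  simp only [bookLevel, Fintype.sum_prod_type, sum_add_distrib, sum_const, card_univ,
    Fintype.card_fin, smul_eq_mul, ← mul_sum, sum_starDepth]
  rw [Fin.sum_univ_eq_sum_range (midDist p), sum_midDist]

lemma le_span_of_isRadioLabeling_bookGraph {m p : ℕ} (hm : 0 < m) (hp : 0 < p)
    {f : Fin m × Fin (p + p) → ℕ} (hf : IsRadioLabeling (bookGraph m (p + p)) (p + p + 1) f) :
    2 * m * p ^ 2 + 2 * p - 1 ≤ span f := by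
  have : Nonempty (Fin m × Fin (p + p)) := ⟨(⟨0, hm⟩, ⟨0, by omega⟩)⟩
  have h := hf.le_span (bookLevel p) 1 fun u v _ => bookGraph_dist_le_s5 u v
  rw [Fintype.card_prod, Fintype.card_fin, Fintype.card_fin, ← Nat.cast_sum, sum_bookLevel] at h
  push_cast [Nat.one_le_iff_ne_zero.2 hm.ne', Nat.one_le_iff_ne_zero.2 hp.ne'] at h
  have hpos : 1 ≤ 2 * m * p ^ 2 + 2 * p := by omega
  zify [hpos]
  linarith

theorem rnBook_lower_bound_general (m n : ℕ) (hm : 3 ≤ m) (hn : Even n) :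
    m * n ^ 2 / 2 + n - 1 ≤ rnBook m n := by
  obtain ⟨p, rfl⟩ := hn
  obtain rfl | hp := Nat.eq_zero_or_pos p
  · simp
  have hsq : m * (p + p) ^ 2 / 2 = 2 * m * p ^ 2 := by
    rw [show m * (p + p) ^ 2 = 2 * (2 * m * p ^ 2) by ring, Nat.mul_div_cancel_left _ two_pos]
  obtain ⟨f₀, hf₀⟩ := exists_isRadioLabeling (bookGraph m (p + p)) (p + p + 1)
  refine le_csInf ⟨_, f₀, hf₀, rfl⟩ ?_
  rintro _ ⟨f, hf, rfl⟩
  rw [hsq]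
  exact (le_span_of_isRadioLabeling_bookGraph (by omega) hp hf).trans' (by omega)

theorem rnBook_lower_bound (m n : ℕ) (hm : 3 ≤ m) (hn : Even n) (hn2 : 2 ≤ n) :
    m * n ^ 2 / 2 + n - 1 ≤ rnBook m n :=
  rnBook_lower_bound_general m n hm hn
end

section
/- Let G = G_{m,n} = S_m □ P_n with m even, m ≥ 4, and n even. Then rn(G) ≤ (m n²)/2 + n − 1. -/
/-!
Write `n = 2h` and enumerate the vertices in `h` blocks of `2m`, block `c` covering the columns
`c` and `c + h`: it starts at the center of column `c + h`, alternates between the two columns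
through every non-central page of each, and ends at the center of column `c`. Consecutive
vertices are then at distance `h + 2`, or `h + 1` when one of them is a center, and each label
exceeds the previous one by `n + 2` minus that distance. Vertices two steps apart lie in the
same column on distinct non-central pages unless a center intervenes, and vertices further apart
have labels at least `3h` apart. The last label is `2mh² + 2h - 1`.
-/

namespace SimpleGraph

variable {V W : Type*} {G : SimpleGraph V} {H : SimpleGraph W}

theorem Walk.apply_le_apply_add_length (φ : V → ℕ)
    (hφ : ∀ a b, G.Adj a b → φ b ≤ φ a + 1) {u v : V} (p : G.Walk u v) :
    φ v ≤ φ u + p.length := by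
  induction p with
  | nil => simp
  | cons hadj _ ih => rw [Walk.length_cons]; have := hφ _ _ hadj; omega

theorem Reachable.apply_le_apply_add_dist (φ : V → ℕ)
    (hφ : ∀ a b, G.Adj a b → φ b ≤ φ a + 1) {u v : V} (h : G.Reachable u v) :
    φ v ≤ φ u + G.dist u v := by
  obtain ⟨p, hp⟩ := h.exists_walk_length_eq_dist
  exact hp ▸ p.apply_le_apply_add_length φ hφ

theorem dist_boxProd {x y : V × W} (hG : G.Reachable x.1 y.1) (hH : H.Reachable x.2 y.2) :
    (G □ H).dist x y = G.dist x.1 y.1 + H.dist x.2 y.2 := by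
  rw [dist, edist_boxProd, ENat.toNat_add (edist_ne_top_iff_reachable.mpr hG)
    (edist_ne_top_iff_reachable.mpr hH)]
  rfl

end SimpleGraph

theorem Nat.div_mod_succ {M t : ℕ} (hM : 0 < M) :
    (t % M + 1 < M ∧ (t + 1) / M = t / M ∧ (t + 1) % M = t % M + 1) ∨
      (t % M + 1 = M ∧ (t + 1) / M = t / M + 1 ∧ (t + 1) % M = 0) := by
  have hdiv := Nat.div_add_mod t M
  have hmod := Nat.mod_lt t hM
  rcases Nat.lt_or_ge (t % M + 1) M with hlt | hge
  · exact .inl ⟨hlt, (Nat.div_mod_unique hM).mpr ⟨by omega, hlt⟩⟩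
  · refine .inr ⟨by omega, (Nat.div_mod_unique hM).mpr ⟨?_, hM⟩⟩
    rw [mul_add]; omega

theorem isRadioLabeling_comp_symm {V ι : Type*} [LinearOrder ι] (G : SimpleGraph V) (D : ℕ)
    (e : ι ≃ V) (L : ι → ℕ)
    (hL : ∀ ⦃t s⦄, t < s → D + 1 + L t ≤ L s + G.dist (e t) (e s)) :
    IsRadioLabeling G D (L ∘ e.symm) := by
  have key : ∀ ⦃t s⦄, t < s → (D : ℤ) + 1 - G.dist (e t) (e s) ≤ |(L t : ℤ) - L s| :=
    fun t s hts => by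
      have := hL hts
      rw [abs_sub_comm]
      refine le_trans ?_ (le_abs_self _)
      omega
  intro u v huv
  rcases lt_trichotomy (e.symm u) (e.symm v) with h | h | h
  · simpa using key h
  · exact absurd (e.symm.injective h) huv
  · rw [SimpleGraph.dist_comm, abs_sub_comm]
    simpa using key h

theorem span_le {V : Type*} {f : V → ℕ} {B : ℕ} (hf : ∀ v, f v ≤ B) : span f ≤ B :=
  (Nat.sub_le _ _).trans (csSup_le' (Set.forall_mem_range.mpr hf))

theorem rnBook_le_span {m n : ℕ} {f : Fin m × Fin n → ℕ}
    (hf : IsRadioLabeling (bookGraph m n) (n + 1) f) : rnBook m n ≤ span f :=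
  Nat.sInf_le ⟨f, hf, rfl⟩

namespace StackedBook

theorem starGraph_adj {m : ℕ} {a b : Fin m} :
    (starGraph m).Adj a b ↔ a ≠ b ∧ ((a : ℕ) = 0 ∨ (b : ℕ) = 0) := by
  simp [starGraph]

theorem starGraph_preconnected (m : ℕ) : (starGraph m).Preconnected := by
  intro a b
  have toCenter : ∀ x : Fin m, (starGraph m).Reachable x ⟨0, x.pos⟩ := fun x => by
    by_cases hx : (x : ℕ) = 0
    · rw [show x = ⟨0, x.pos⟩ from Fin.ext hx]
    · exact (starGraph_adj.mpr ⟨fun h => hx (by simp [h]), Or.inr rfl⟩).reachable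
  exact (toCenter a).trans (toCenter b).symm

theorem pathGraph'_eq_pathGraph (n : ℕ) : pathGraph' n = SimpleGraph.pathGraph n := by
  ext a b
  simp only [pathGraph', SimpleGraph.fromRel_adj, SimpleGraph.pathGraph_adj, ne_eq,
    Fin.ext_iff]
  omega

def starDist (i j : ℕ) : ℕ := if i = j then 0 else if i = 0 ∨ j = 0 then 1 else 2

theorem starDist_le_dist {m : ℕ} (a b : Fin m) : starDist a b ≤ (starGraph m).dist a b := by
  have hreach := starGraph_preconnected m a b
  unfold starDist
  split_ifs with hab hcenter
  · exact Nat.zero_le _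
  · exact hreach.pos_dist_of_ne fun h => hab (by rw [h])
  · exact hreach.one_lt_dist_of_ne_of_not_adj (fun h => hab (by rw [h]))
      fun h => hcenter (starGraph_adj.mp h).2

theorem natDist_le_dist {n : ℕ} (a b : Fin n) : Nat.dist a b ≤ (pathGraph' n).dist a b := by
  have hreach := pathGraph'_eq_pathGraph n ▸ SimpleGraph.pathGraph_preconnected n a b
  have hval : ∀ x y, (pathGraph' n).Adj x y → (y : ℕ) ≤ x + 1 := fun x y hxy => by
    rw [pathGraph'_eq_pathGraph, SimpleGraph.pathGraph_adj] at hxy; omega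
  have h₁ := hreach.apply_le_apply_add_dist _ hval
  have h₂ := hreach.symm.apply_le_apply_add_dist _ hval
  rw [SimpleGraph.dist_comm] at h₂
  unfold Nat.dist; omega

def bookDist (p q : ℕ × ℕ) : ℕ := starDist p.1 q.1 + Nat.dist p.2 q.2

theorem bookDist_le_dist {m n : ℕ} (u v : Fin m × Fin n) :
    bookDist (u.1, u.2) (v.1, v.2) ≤ (bookGraph m n).dist u v := by
  rw [bookGraph, SimpleGraph.dist_boxProd (starGraph_preconnected m _ _)
    (pathGraph'_eq_pathGraph n ▸ SimpleGraph.pathGraph_preconnected n _ _)]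
  exact add_le_add (starDist_le_dist _ _) (natDist_le_dist _ _)

theorem bookDist_pos {p q : ℕ × ℕ} (hpq : p ≠ q) : 0 < bookDist p q := by
  rw [Ne, Prod.ext_iff] at hpq
  unfold bookDist starDist Nat.dist
  split_ifs <;> omega

variable (m h : ℕ)

def page (k : ℕ) : ℕ := if k < m then k else if k < 2 * m - 1 then k + 1 - m else 0

def column (c k : ℕ) : ℕ := c + if k % 2 = 0 then h else 0

def bonus (k : ℕ) : ℕ := if k = 0 then 0 else if k = 2 * m - 1 then 2 else 1

/-- The `t`-th vertex, as (page, column), for `n = 2h`: `t = 2m c + k` is position `k` of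
block `c`. Positions `0` and `2m - 1` are the centers of columns `c + h` and `c`; the other odd
positions lie in column `c` and the even ones in column `c + h`, and as `m` is even `page` runs
through all non-central pages in each of the two columns. -/
def vertexAt (t : ℕ) : ℕ × ℕ := (page m (t % (2 * m)), column h (t / (2 * m)) (t % (2 * m)))

/-- `3 * c + bonus m k` counts the steps before position `t` that touch a center (three per
block), each of which earns one unit on top of `h` (see `label_succ`). -/
def label (t : ℕ) : ℕ := h * t + 3 * (t / (2 * m)) + bonus m (t % (2 * m))

variable {m h}

theorem label_succ (hm : 2 ≤ m) (t : ℕ) :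
    label m h (t + 1) =
      label m h t + h + if t % (2 * m) = 0 ∨ 2 * m - 2 ≤ t % (2 * m) then 1 else 0 := by
  rcases Nat.div_mod_succ (t := t) (by omega : 0 < 2 * m) with
    ⟨hk, hdiv, hmod⟩ | ⟨hk, hdiv, hmod⟩ <;>
  · simp only [label, hdiv, hmod, mul_add, mul_one, bonus]
    generalize t % (2 * m) = k at *
    grind

theorem label_add_mul_le (hm : 2 ≤ m) (t d : ℕ) :
    label m h t + h * d ≤ label m h (t + d) := by
  induction d with
  | zero => simp
  | succ d ih => rw [← add_assoc, label_succ hm, mul_add_one]; split_ifs <;> omega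

theorem label_le {t : ℕ} (ht : t < 2 * m * h) : label m h t ≤ 2 * m * h * h + 2 * h - 1 := by
  have hc : t / (2 * m) < h := Nat.div_lt_of_lt_mul ht
  have hbonus : bonus m (t % (2 * m)) ≤ 2 := by unfold bonus; split_ifs <;> omega
  have ht' : h * t + h ≤ 2 * m * h * h := by nlinarith
  unfold label; omega

theorem label_radio_succ (hm : 4 ≤ m) (t : ℕ) :
    2 * h + 2 + label m h t ≤
      label m h (t + 1) + bookDist (vertexAt m h t) (vertexAt m h (t + 1)) := by
  rw [label_succ (by omega)]
  rcases Nat.div_mod_succ (t := t) (by omega : 0 < 2 * m) with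
    ⟨hk, hdiv, hmod⟩ | ⟨hk, hdiv, hmod⟩ <;>
  · simp only [vertexAt, hdiv, hmod, bookDist, page, column, starDist, Nat.dist]
    generalize t % (2 * m) = k at *
    grind

theorem label_radio_add_two (hm : 4 ≤ m) (t : ℕ)
    (hne : vertexAt m h t ≠ vertexAt m h (t + 2)) :
    2 * h + 2 + label m h t ≤
      label m h (t + 2) + bookDist (vertexAt m h t) (vertexAt m h (t + 2)) := by
  have hpos := bookDist_pos hne
  rw [show t + 2 = t + 1 + 1 from rfl, label_succ (by omega), label_succ (by omega)] at *
  rcases Nat.div_mod_succ (t := t) (by omega : 0 < 2 * m) with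
    ⟨hk, hdiv, hmod⟩ | ⟨hk, hdiv, hmod⟩ <;>
  rcases Nat.div_mod_succ (t := t + 1) (by omega : 0 < 2 * m) with
    ⟨hk', hdiv', hmod'⟩ | ⟨hk', hdiv', hmod'⟩ <;>
  · simp only [vertexAt, hdiv, hmod, hdiv', hmod', bookDist, page, column, starDist,
      Nat.dist] at *
    generalize t % (2 * m) = k at *
    grind

theorem label_radio (hm : 4 ≤ m) (hh : 1 ≤ h) {t s : ℕ} (hts : t < s)
    (hne : vertexAt m h t ≠ vertexAt m h s) :
    2 * h + 2 + label m h t ≤ label m h s + bookDist (vertexAt m h t) (vertexAt m h s) := by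
  obtain rfl | rfl | hfar : s = t + 1 ∨ s = t + 2 ∨ t + 3 ≤ s := by omega
  · exact label_radio_succ hm t
  · exact label_radio_add_two hm t hne
  · have hlabel := label_add_mul_le (m := m) (h := h) (by omega) t (s - t)
    have hmul : h * 3 ≤ h * (s - t) := Nat.mul_le_mul_left h (by omega)
    have hpos := bookDist_pos hne
    rw [Nat.add_sub_cancel' hts.le] at hlabel
    omega

theorem vertexAt_injOn (hme : Even m) : Set.InjOn (vertexAt m h) (Set.Iio (2 * m * h)) := by
  intro t ht s hs hts
  have hct : t / (2 * m) < h := Nat.div_lt_of_lt_mul ht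
  have hcs : s / (2 * m) < h := Nat.div_lt_of_lt_mul hs
  have hm : 0 < 2 * m := Nat.pos_of_mul_pos_right (Nat.zero_lt_of_lt ht)
  have hkt := Nat.mod_lt t hm
  have hks := Nat.mod_lt s hm
  have hck : t / (2 * m) = s / (2 * m) ∧ t % (2 * m) = s % (2 * m) := by
    simp only [vertexAt, Prod.mk.injEq, page, column] at hts
    obtain ⟨r, rfl⟩ := hme
    generalize t / (2 * (r + r)) = c at *
    generalize s / (2 * (r + r)) = c' at *
    generalize t % (2 * (r + r)) = k at *
    generalize s % (2 * (r + r)) = k' at *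
    grind
  rw [← Nat.div_add_mod t (2 * m), ← Nat.div_add_mod s (2 * m), hck.1, hck.2]

theorem vertexAt_fst_lt {t : ℕ} (ht : t < 2 * m * h) : (vertexAt m h t).1 < m := by
  have := Nat.mod_lt t (Nat.pos_of_mul_pos_right (Nat.zero_lt_of_lt ht))
  simp only [vertexAt, page]
  split_ifs <;> omega

theorem vertexAt_snd_lt {t : ℕ} (ht : t < 2 * m * h) : (vertexAt m h t).2 < h + h := by
  have hc : t / (2 * m) < h := Nat.div_lt_of_lt_mul ht
  simp only [vertexAt, column]
  split_ifs <;> omega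

variable (m h) in
def vertexEnum (t : Fin (2 * m * h)) : Fin m × Fin (h + h) :=
  (⟨(vertexAt m h t).1, vertexAt_fst_lt t.2⟩, ⟨(vertexAt m h t).2, vertexAt_snd_lt t.2⟩)

theorem vertexEnum_bijective (hme : Even m) : Function.Bijective (vertexEnum m h) := by
  rw [Fintype.bijective_iff_injective_and_card]
  refine ⟨fun t s hts => Fin.ext (vertexAt_injOn hme t.2 s.2 ?_), by simp; ring⟩
  simpa [vertexEnum, Prod.ext_iff, Fin.ext_iff] using hts

variable (m h) in
noncomputable def radioLabeling (hme : Even m) : Fin m × Fin (h + h) → ℕ :=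
  (fun t : Fin (2 * m * h) => label m h t) ∘ (Equiv.ofBijective _ (vertexEnum_bijective hme)).symm

theorem isRadioLabeling_radioLabeling (hm : 4 ≤ m) (hme : Even m) :
    IsRadioLabeling (bookGraph m (h + h)) (h + h + 1) (radioLabeling m h hme) := by
  refine isRadioLabeling_comp_symm _ _ _ _ fun t s hts => ?_
  have hh : 1 ≤ h := Nat.pos_of_mul_pos_left s.pos
  have hne := (vertexAt_injOn hme).ne t.2 s.2 (Fin.val_ne_of_ne hts.ne)
  have hdist : bookDist (vertexAt m h t) (vertexAt m h s) ≤
      (bookGraph m (h + h)).dist (vertexEnum m h t) (vertexEnum m h s) :=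
    bookDist_le_dist (vertexEnum m h t) (vertexEnum m h s)
  have := label_radio hm hh hts hne
  simp only [Equiv.ofBijective_apply]
  omega

theorem span_radioLabeling_le (hme : Even m) :
    span (radioLabeling m h hme) ≤ 2 * m * h * h + 2 * h - 1 :=
  span_le fun _ => label_le (Fin.is_lt _)

end StackedBook

theorem rnBook_upper_bound_m_even_general (m n : ℕ) (hm : 4 ≤ m) (hme : Even m)
    (hn : Even n) :
    rnBook m n ≤ m * n ^ 2 / 2 + n - 1 := by
  obtain ⟨h, rfl⟩ := hn
  have hsq : m * (h + h) ^ 2 / 2 = 2 * m * h * h := by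
    rw [show m * (h + h) ^ 2 = 2 * (2 * m * h * h) by ring, Nat.mul_div_cancel_left _ two_pos]
  calc rnBook m (h + h)
      ≤ span (StackedBook.radioLabeling m h hme) :=
        rnBook_le_span (StackedBook.isRadioLabeling_radioLabeling hm hme)
    _ ≤ 2 * m * h * h + 2 * h - 1 := StackedBook.span_radioLabeling_le hme
    _ = m * (h + h) ^ 2 / 2 + (h + h) - 1 := by omega

theorem rnBook_upper_bound_m_even (m n : ℕ) (hm : 4 ≤ m) (hme : Even m)
    (hn : Even n) (hn2 : 2 ≤ n) :
    rnBook m n ≤ m * n ^ 2 / 2 + n - 1 :=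
  rnBook_upper_bound_m_even_general m n hm hme hn
end

section
/- Let G = G_{m,n} = S_m □ P_n with m ≥ 4 and n even. Then rn(G) = (m n²)/2 + n − 1. -/
namespace RB

/-- star-distance on page indices (as naturals) -/
def dstar (a b : ℕ) : ℕ := if a = b then 0 else if a = 0 ∨ b = 0 then 1 else 2

/-- the distance formula for the book graph, on value level -/
def dB {m n : ℕ} (u v : Fin m × Fin n) : ℕ :=
  dstar u.1.val v.1.val + Nat.dist u.2.val v.2.val

lemma book_adj {m n : ℕ} {u v : Fin m × Fin n} :
    (bookGraph m n).Adj u v ↔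
      ((u.1 ≠ v.1 ∧ ((u.1 : ℕ) = 0 ∨ (v.1 : ℕ) = 0)) ∧ u.2 = v.2) ∨
      (u.1 = v.1 ∧ (u.2 ≠ v.2 ∧ ((u.2 : ℕ) + 1 = v.2 ∨ (v.2 : ℕ) + 1 = u.2))) := by
  rw [bookGraph, SimpleGraph.boxProd_adj, starGraph, pathGraph',
    SimpleGraph.fromRel_adj, SimpleGraph.fromRel_adj]
  tauto

lemma dstar_lip {a b c : ℕ} (hab : a ≠ b) (h0 : a = 0 ∨ b = 0) :
    dstar a c ≤ dstar b c + 1 := by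
  unfold dstar; split_ifs <;> omega

lemma dB_lip {m n : ℕ} {u v w : Fin m × Fin n} (h : (bookGraph m n).Adj u v) :
    dB u w ≤ dB v w + 1 := by
  rw [book_adj] at h
  unfold dB
  rcases h with ⟨⟨h1, h2⟩, h3⟩ | ⟨h1, h2, h3⟩
  · have : dstar u.1.val w.1.val ≤ dstar v.1.val w.1.val + 1 :=
      dstar_lip (fun hh => h1 (Fin.val_injective hh)) h2
    rw [h3]; omega
  · rw [h1]
    have : Nat.dist u.2.val w.2.val ≤ Nat.dist v.2.val w.2.val + 1 := by
      simp only [Nat.dist]; omega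
    omega

lemma dB_le_walk {m n : ℕ} :
    ∀ {u v : Fin m × Fin n} (p : (bookGraph m n).Walk u v), dB u v ≤ p.length
  | _, _, .nil => by simp [dB, dstar, Nat.dist]
  | u, v, .cons h p => by
    have ih := dB_le_walk p
    have := dB_lip (w := v) h
    simp only [SimpleGraph.Walk.length_cons]
    omega

/-- a walk along the path factor -/
lemma path_walk {m n : ℕ} (a : Fin m) :
    ∀ (d : ℕ) (i j : Fin n), Nat.dist i.val j.val = d →
      ∃ w : (bookGraph m n).Walk (a, i) (a, j), w.length = d := by
  intro d
  induction d with
  | zero =>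
    intro i j h
    have : i = j := by
      have : i.val = j.val := Nat.eq_of_dist_eq_zero h
      exact Fin.val_injective this
    subst this
    exact ⟨SimpleGraph.Walk.nil, rfl⟩
  | succ d ih =>
    intro i j h
    rcases lt_or_gt_of_ne (show i.val ≠ j.val by
      intro hh; rw [hh] at h; simp [Nat.dist] at h) with hlt | hgt
    · have hj : i.val + 1 ≤ j.val := hlt
      have hi' : i.val + 1 < n := lt_of_le_of_lt hj j.isLt
      set i' : Fin n := ⟨i.val + 1, hi'⟩ with hi'def
      have hadj : (bookGraph m n).Adj (a, i) (a, i') := by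
        rw [book_adj]; right
        refine ⟨rfl, ?_, Or.inl rfl⟩
        intro hh
        have h2 := congrArg Fin.val hh
        simp only [hi'def] at h2
        omega
      have hd : Nat.dist i'.val j.val = d := by
        simp only [hi'def, Nat.dist] at h ⊢; omega
      obtain ⟨w, hw⟩ := ih i' j hd
      exact ⟨SimpleGraph.Walk.cons hadj w, by simp [hw]⟩
    · have hj : j.val + 1 ≤ i.val := hgt
      have hi' : i.val - 1 < n := by omega
      set i' : Fin n := ⟨i.val - 1, hi'⟩ with hi'def
      have hadj : (bookGraph m n).Adj (a, i) (a, i') := by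
        rw [book_adj]; right
        refine ⟨rfl, ?_, Or.inr (by simp only [hi'def]; omega)⟩
        intro hh
        have h2 := congrArg Fin.val hh
        simp only [hi'def] at h2
        omega
      have hd : Nat.dist i'.val j.val = d := by
        simp only [hi'def, Nat.dist] at h ⊢; omega
      obtain ⟨w, hw⟩ := ih i' j hd
      exact ⟨SimpleGraph.Walk.cons hadj w, by simp [hw]⟩

lemma star_walk {m n : ℕ} (hm : 0 < m) (a b : Fin m) (i : Fin n) :
    ∃ w : (bookGraph m n).Walk (a, i) (b, i), w.length = dstar a.val b.val := by
  by_cases hab : a = b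
  · subst hab
    refine ⟨SimpleGraph.Walk.nil, ?_⟩
    simp [dstar]
  · have hab' : a.val ≠ b.val := fun h => hab (Fin.val_injective h)
    by_cases h0 : a.val = 0 ∨ b.val = 0
    · have hadj : (bookGraph m n).Adj (a, i) (b, i) := by
        rw [book_adj]; exact Or.inl ⟨⟨hab, h0⟩, rfl⟩
      have hd : dstar a.val b.val = 1 := by
        unfold dstar; rw [if_neg hab', if_pos h0]
      refine ⟨SimpleGraph.Walk.cons hadj SimpleGraph.Walk.nil, ?_⟩
      simp [hd]
    · push_neg at h0
      set z : Fin m := ⟨0, hm⟩ with hz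
      have h1 : (bookGraph m n).Adj (a, i) (z, i) := by
        rw [book_adj]; left
        refine ⟨⟨?_, Or.inr (by simp [hz])⟩, rfl⟩
        intro hh
        have h2 := congrArg Fin.val hh
        simp only [hz] at h2
        exact h0.1 h2
      have h2 : (bookGraph m n).Adj (z, i) (b, i) := by
        rw [book_adj]; left
        refine ⟨⟨?_, Or.inl (by simp [hz])⟩, rfl⟩
        intro hh
        have h3 := congrArg Fin.val hh
        simp only [hz] at h3
        exact h0.2 h3.symm
      have hd : dstar a.val b.val = 2 := by
        unfold dstar; rw [if_neg hab', if_neg (by push_neg; exact h0)]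
      refine ⟨SimpleGraph.Walk.cons h1 (SimpleGraph.Walk.cons h2 SimpleGraph.Walk.nil), ?_⟩
      simp [hd]

lemma exists_walk_dB {m n : ℕ} (hm : 0 < m) (u v : Fin m × Fin n) :
    ∃ w : (bookGraph m n).Walk u v, w.length = dB u v := by
  obtain ⟨w1, hw1⟩ := star_walk (n := n) hm u.1 v.1 u.2
  obtain ⟨w2, hw2⟩ := path_walk (m := m) v.1 (Nat.dist u.2.val v.2.val) u.2 v.2 rfl
  exact ⟨w1.append w2, by simp [hw1, hw2, dB]⟩

lemma dist_le_dB {m n : ℕ} (hm : 0 < m) (u v : Fin m × Fin n) :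
    (bookGraph m n).dist u v ≤ dB u v := by
  obtain ⟨w, hw⟩ := exists_walk_dB hm u v
  calc (bookGraph m n).dist u v ≤ w.length := SimpleGraph.dist_le w
  _ = dB u v := hw

lemma dB_le_dist {m n : ℕ} (hm : 0 < m) (u v : Fin m × Fin n) :
    dB u v ≤ (bookGraph m n).dist u v := by
  obtain ⟨w0, _⟩ := exists_walk_dB hm u v
  obtain ⟨w, hw⟩ := SimpleGraph.Reachable.exists_walk_length_eq_dist ⟨w0⟩
  rw [← hw]
  exact dB_le_walk w

lemma dB_le_diam {m n : ℕ} (hn : 0 < n) (u v : Fin m × Fin n) : dB u v ≤ n + 1 := by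
  have h1 : dstar u.1.val v.1.val ≤ 2 := by unfold dstar; split_ifs <;> omega
  have h2 : Nat.dist u.2.val v.2.val ≤ n - 1 := by
    have := u.2.isLt; have := v.2.isLt
    simp [Nat.dist]; omega
  unfold dB; omega

lemma dB_pos {m n : ℕ} {u v : Fin m × Fin n} (h : u ≠ v) : 1 ≤ dB u v := by
  by_cases h1 : u.1 = v.1
  · have h2 : u.2 ≠ v.2 := fun hh => h (Prod.ext_iff.mpr ⟨h1, hh⟩)
    have : u.2.val ≠ v.2.val := fun hh => h2 (Fin.val_injective hh)
    have : 1 ≤ Nat.dist u.2.val v.2.val := by simp [Nat.dist]; omega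
    unfold dB; omega
  · have : u.1.val ≠ v.1.val := fun hh => h1 (Fin.val_injective hh)
    have : 1 ≤ dstar u.1.val v.1.val := by unfold dstar; split_ifs <;> omega
    unfold dB; omega


section LowerBound

/-- weight of a vertex -/
def Wt {m n : ℕ} (v : Fin m × Fin n) : ℕ :=
  Nat.dist (2 * v.2.val) (n - 1) + (if v.1.val = 0 then 0 else 2)

lemma one_le_Wt {m n : ℕ} (hn2 : n % 2 = 0) (hn0 : 0 < n) (v : Fin m × Fin n) : 1 ≤ Wt v := by
  have h := v.2.isLt
  have : 2 * v.2.val ≠ n - 1 := by omega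
  have : 1 ≤ Nat.dist (2 * v.2.val) (n - 1) := by simp [Nat.dist]; omega
  unfold Wt; omega

lemma two_dB_le_Wt {m n : ℕ} (u v : Fin m × Fin n) : 2 * dB u v ≤ Wt u + Wt v := by
  have h2 : 2 * Nat.dist u.2.val v.2.val ≤
      Nat.dist (2 * u.2.val) (n - 1) + Nat.dist (2 * v.2.val) (n - 1) := by
    have ht := Nat.dist.triangle_inequality (2 * u.2.val) (n - 1) (2 * v.2.val)
    have hcm := Nat.dist_comm (n - 1) (2 * v.2.val)
    have he : Nat.dist (2 * u.2.val) (2 * v.2.val) = 2 * Nat.dist u.2.val v.2.val := by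
      simp [Nat.dist]; omega
    omega
  unfold dB Wt dstar
  split_ifs <;> omega

lemma sum_consec (a : ℕ → ℤ) (M : ℕ) :
    ∑ t ∈ Finset.range M, (a t + a (t + 1)) =
      2 * ∑ t ∈ Finset.range (M + 1), a t - a 0 - a M := by
  induction M with
  | zero => simp; omega
  | succ M ih =>
    rw [Finset.sum_range_succ, ih, Finset.sum_range_succ (n := M + 1)]
    ring

lemma sum_split (f : ℕ → ℕ) (k : ℕ) :
    ∑ i ∈ Finset.range (2 * k), f i =
      ∑ i ∈ Finset.range k, f i + ∑ i ∈ Finset.range k, f (k + i) := by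
  have h1 : 2 * k = k + k := by omega
  rw [h1, Finset.sum_range_add]

lemma sum_h (k : ℕ) :
    ∑ i ∈ Finset.range (2 * k), Nat.dist (2 * i) (2 * k - 1) = 2 * k * k := by
  rw [sum_split]
  rw [← Finset.sum_add_distrib]
  have : ∀ i ∈ Finset.range k,
      Nat.dist (2 * i) (2 * k - 1) + Nat.dist (2 * (k + i)) (2 * k - 1) = 2 * k := by
    intro i hi
    have := Finset.mem_range.mp hi
    simp [Nat.dist]; omega
  rw [Finset.sum_congr rfl this, Finset.sum_const, Finset.card_range]
  ring

lemma sum_ite_zero (M : ℕ) :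
    ∑ i ∈ Finset.range M, (if i = 0 then 0 else 2) = 2 * (M - 1) := by
  induction M with
  | zero => simp
  | succ M ih =>
    rw [Finset.sum_range_succ, ih]
    rcases Nat.eq_zero_or_pos M with h | h
    · subst h; simp
    · rw [if_neg (by omega)]; omega

lemma sum_Wt {m n : ℕ} (k : ℕ) (hn : n = 2 * k) :
    ∑ v : Fin m × Fin n, Wt v = m * (2 * k * k) + 2 * k * (2 * (m - 1)) := by
  rw [Fintype.sum_prod_type]
  have hrow : ∀ a : Fin m,
      ∑ i : Fin n, Wt (a, i) = 2 * k * k + n * (if a.val = 0 then 0 else 2) := by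
    intro a
    have hterm : ∀ i : Fin n, Wt ((a, i) : Fin m × Fin n) =
        Nat.dist (2 * i.val) (n - 1) + (if a.val = 0 then 0 else 2) := fun i => rfl
    rw [Finset.sum_congr rfl (fun i _ => hterm i), Finset.sum_add_distrib]
    congr 1
    · have := Fin.sum_univ_eq_sum_range (fun i => Nat.dist (2 * i) (n - 1)) n
      rw [this, hn]
      exact sum_h k
    · rw [Finset.sum_const, Finset.card_univ, Fintype.card_fin, smul_eq_mul]
  rw [Finset.sum_congr rfl (fun a _ => hrow a), Finset.sum_add_distrib]
  simp only [Finset.sum_const, Finset.card_univ, Fintype.card_fin, smul_eq_mul]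
  have : ∑ a : Fin m, n * (if a.val = 0 then 0 else 2)
      = n * ∑ a : Fin m, (if a.val = 0 then 0 else 2) := by
    rw [Finset.mul_sum]
  rw [this]
  have := Fin.sum_univ_eq_sum_range (fun i => if i = 0 then 0 else 2) m
  rw [this, sum_ite_zero, hn]
  try ring

lemma lower_bound {m n : ℕ} (k : ℕ) (hm : 4 ≤ m) (hk : 0 < k) (hn : n = 2 * k)
    (f : Fin m × Fin n → ℕ) (hf : IsRadioLabeling (bookGraph m n) (n + 1) f) :
    2 * (m * k * k) + 2 * k - 1 ≤ span f := by
  have hm0 : 0 < m := by omega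
  have hn0 : 0 < n := by omega
  -- injectivity of f
  have hinj : Function.Injective f := by
    intro u v huv
    by_contra hne
    have h := hf u v hne
    have hd : (bookGraph m n).dist u v ≤ n + 1 :=
      le_trans (dist_le_dB hm0 u v) (dB_le_diam hn0 u v)
    rw [huv] at h
    simp only [sub_self, abs_zero] at h
    have : ((bookGraph m n).dist u v : ℤ) ≤ (n : ℤ) + 1 := by exact_mod_cast hd
    omega
  set N := m * n with hN
  have hNcard : Fintype.card (Fin m × Fin n) = N := by simp [hN]
  have hN0 : 0 < N := by
    have : 0 < m * n := Nat.mul_pos hm0 hn0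
    omega
  set s : Finset ℕ := Finset.univ.image f with hs
  have hscard : s.card = N := by
    rw [hs, Finset.card_image_of_injective _ hinj, Finset.card_univ, hNcard]
  set oi := s.orderIsoOfFin hscard with hoi
  have hmem : ∀ t : Fin N, (oi t : ℕ) ∈ s := fun t => (oi t).2
  have hex : ∀ t : Fin N, ∃ v, f v = (oi t : ℕ) := by
    intro t
    obtain ⟨v, _, hv⟩ := Finset.mem_image.mp (hmem t)
    exact ⟨v, hv⟩
  choose e he using hex
  have hemono : ∀ {t t' : Fin N}, t < t' → f (e t) < f (e t') := by
    intro t t' h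
    rw [he, he]
    exact_mod_cast oi.strictMono h
  have heinj : Function.Injective e := by
    intro t t' h
    by_contra hne
    rcases lt_or_gt_of_ne hne with hlt | hlt
    · exact absurd (congrArg f h) (ne_of_lt (hemono hlt))
    · exact absurd (congrArg f h) (ne_of_gt (hemono hlt))
  have hebij : Function.Bijective e :=
    (Fintype.bijective_iff_injective_and_card e).mpr ⟨heinj, by simp [hNcard]⟩
  set E : ℕ → (Fin m × Fin n) := fun t => e ⟨t % N, Nat.mod_lt t hN0⟩ with hE
  have hElt : ∀ t (h : t < N), E t = e ⟨t, h⟩ := by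
    intro t h; simp only [hE]; congr 1; exact Fin.ext (Nat.mod_eq_of_lt h)
  set F : ℕ → ℤ := fun t => (f (E t) : ℤ) with hF
  -- key step inequality
  have key : ∀ t, t + 1 < N →
      2 * ((n : ℤ) + 2) - ((Wt (E t) : ℤ) + (Wt (E (t + 1)) : ℤ)) ≤
        2 * (F (t + 1) - F t) := by
    intro t ht
    have h0 : t < N := by omega
    have h1 : E t ≠ E (t + 1) := by
      rw [hElt t h0, hElt (t + 1) ht]
      intro hh
      have := heinj hh
      simp only [Fin.mk.injEq] at this
      omega
    have hrad := hf (E t) (E (t + 1)) h1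
    have hlt : F t < F (t + 1) := by
      simp only [hF]
      have : f (E t) < f (E (t + 1)) := by
        rw [hElt t h0, hElt (t + 1) ht]
        exact hemono (by simp [Fin.lt_def])
      exact_mod_cast this
    have habs : |(f (E t) : ℤ) - (f (E (t + 1)) : ℤ)| = F (t + 1) - F t := by
      rw [abs_sub_comm, abs_of_nonneg (by simp only [hF] at hlt ⊢; omega)]
    rw [habs] at hrad
    have hdist : ((bookGraph m n).dist (E t) (E (t + 1)) : ℤ) ≤
        (dB (E t) (E (t + 1)) : ℤ) := by exact_mod_cast dist_le_dB hm0 _ _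
    have hWt : 2 * (dB (E t) (E (t + 1)) : ℤ) ≤
        (Wt (E t) : ℤ) + (Wt (E (t + 1)) : ℤ) := by exact_mod_cast two_dB_le_Wt _ _
    push_cast at hrad
    omega
  -- sum it up
  have hsum : ∑ t ∈ Finset.range (N - 1),
      (2 * ((n : ℤ) + 2) - ((Wt (E t) : ℤ) + (Wt (E (t + 1)) : ℤ))) ≤
      ∑ t ∈ Finset.range (N - 1), 2 * (F (t + 1) - F t) := by
    apply Finset.sum_le_sum
    intro t ht
    exact key t (by have := Finset.mem_range.mp ht; omega)
  have hrhs : ∑ t ∈ Finset.range (N - 1), 2 * (F (t + 1) - F t) =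
      2 * (F (N - 1) - F 0) := by
    rw [← Finset.mul_sum, Finset.sum_range_sub F]
  have hWsum : ∑ t ∈ Finset.range N, (Wt (E t) : ℤ) = ∑ v : Fin m × Fin n, (Wt v : ℤ) := by
    rw [← Fin.sum_univ_eq_sum_range (fun t => (Wt (E t) : ℤ)) N]
    have h1 : ∀ t : Fin N, (Wt (E t.val) : ℤ) = (Wt (e t) : ℤ) := by
      intro t; rw [hElt t.val t.isLt]
    rw [Finset.sum_congr rfl (fun t _ => h1 t)]
    exact Fintype.sum_bijective e hebij _ _ (fun t => rfl)
  have hlhs : ∑ t ∈ Finset.range (N - 1),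
      (2 * ((n : ℤ) + 2) - ((Wt (E t) : ℤ) + (Wt (E (t + 1)) : ℤ))) =
      (N - 1 : ℤ) * (2 * ((n : ℤ) + 2)) -
        (2 * ∑ v : Fin m × Fin n, (Wt v : ℤ) - (Wt (E 0) : ℤ) - (Wt (E (N - 1)) : ℤ)) := by
    rw [Finset.sum_sub_distrib, Finset.sum_const, Finset.card_range,
      sum_consec (fun t => (Wt (E t) : ℤ)) (N - 1)]
    have hN1 : N - 1 + 1 = N := by omega
    rw [hN1, hWsum, nsmul_eq_mul, show ((N - 1 : ℕ) : ℤ) = (N : ℤ) - 1 from by omega]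
    try ring
  -- numeric bound
  have hW0 : 1 ≤ (Wt (E 0) : ℤ) := by
    exact_mod_cast one_le_Wt (by omega) hn0 (E 0)
  have hWN : 1 ≤ (Wt (E (N - 1)) : ℤ) := by
    exact_mod_cast one_le_Wt (by omega) hn0 (E (N - 1))
  have hSW : (∑ v : Fin m × Fin n, (Wt v : ℤ)) =
      (m : ℤ) * (2 * k * k) + 2 * k * (2 * ((m : ℤ) - 1)) := by
    have := sum_Wt (m := m) (n := n) k hn
    have hcast : (∑ v : Fin m × Fin n, (Wt v : ℤ)) =
        ((∑ v : Fin m × Fin n, Wt v : ℕ) : ℤ) := by push_cast; rfl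
    rw [hcast, this]
    push_cast
    have : ((m - 1 : ℕ) : ℤ) = (m : ℤ) - 1 := by omega
    rw [this]
  set X := 2 * (m * k * k) + 2 * k - 1 with hX
  have hdiff : (X : ℤ) ≤ F (N - 1) - F 0 := by
    have hXc : (X : ℤ) = 2 * (m : ℤ) * k * k + 2 * (k : ℤ) - 1 := by
      rw [hX, Nat.cast_sub (by omega)]
      push_cast
      ring
    have h1 := le_trans (le_of_eq hlhs.symm) (le_trans hsum (le_of_eq hrhs))
    rw [hSW] at h1
    have hNval : (N : ℤ) = 2 * (m : ℤ) * k := by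
      simp only [hN, hn]; push_cast; ring
    have hnval : (n : ℤ) = 2 * k := by exact_mod_cast hn
    rw [hNval, hnval] at h1
    rw [hXc]
    nlinarith [h1, hW0, hWN]
  -- conclude
  have hmax : f (E (N - 1)) ≤ sSup (Set.range f) :=
    le_csSup (Set.finite_range f).bddAbove ⟨E (N - 1), rfl⟩
  have hmin : sInf (Set.range f) ≤ f (E 0) := Nat.sInf_le ⟨E 0, rfl⟩
  unfold span
  simp only [hF] at hdiff
  omega

end LowerBound

section UpperDefs

/-- levels within window `q`: low level -/
def xx (k q : ℕ) : ℕ := if q = 0 then k - 1 else if k - 1 ≤ q then 0 else q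

/-- page shift for even (low) slots -/
def ssv (k q : ℕ) : ℕ := if q = 0 ∨ q = k - 1 then 0 else 2

/-- page shift for odd (high) slots in non-final windows -/
def uuv (q : ℕ) : ℕ := if q = 0 then 2 else 0

/-- twisted page assignment for the final window's odd slots -/
def tw (m b : ℕ) : ℕ := if b = m - 1 then 0 else if b = m - 2 then 1 else b + 2

/-- page at slot `(q, b, c)` -/
def pag (m k q b c : ℕ) : ℕ :=
  if c = 0 then (b + ssv k q) % m
  else if q = k - 1 then tw m b else (b + uuv q) % m

/-- level at slot `(q, c)` -/
def lev (k q c : ℕ) : ℕ := if c = 0 then xx k q else xx k q + k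

lemma xx_lt {k : ℕ} (hk : 0 < k) (q : ℕ) : xx k q < k := by
  unfold xx; split_ifs <;> omega

lemma lev_lt {k : ℕ} (hk : 0 < k) (q c : ℕ) : lev k q c < 2 * k := by
  unfold lev
  have := xx_lt hk q
  split_ifs <;> omega

lemma tw_lt {m : ℕ} (hm : 4 ≤ m) {b : ℕ} (hb : b < m) : tw m b < m := by
  unfold tw; split_ifs <;> omega

lemma pag_lt {m : ℕ} (hm : 4 ≤ m) (k q c : ℕ) {b : ℕ} (hb : b < m) :
    pag m k q b c < m := by
  unfold pag
  split_ifs with h1 h2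
  · exact Nat.mod_lt _ (by omega)
  · exact tw_lt hm hb
  · exact Nat.mod_lt _ (by omega)

/-- explicit small-value mod computation -/
lemma mod_small {m y a : ℕ} (h1 : y < m) (h2 : a ≤ m) :
    (y + a) % m = if y + a < m then y + a else y + a - m := by
  split_ifs with h
  · exact Nat.mod_eq_of_lt h
  · rw [Nat.mod_eq_sub_mod (by omega), Nat.mod_eq_of_lt (by omega)]

lemma mod_ne_mod {m x a b : ℕ} (ha : a < m) (hb : b < m) (hne : a ≠ b) :
    (x + a) % m ≠ (x + b) % m := by
  have h0 : 0 < m := by omega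
  have hxa : (x + a) % m = (x % m + a) % m := by
    conv_lhs => rw [Nat.add_mod, Nat.mod_eq_of_lt ha]
  have hxb : (x + b) % m = (x % m + b) % m := by
    conv_lhs => rw [Nat.add_mod, Nat.mod_eq_of_lt hb]
  have hx : x % m < m := Nat.mod_lt _ h0
  rw [hxa, hxb, mod_small hx (by omega), mod_small hx (by omega)]
  split_ifs <;> omega

lemma mod_self_add {m a : ℕ} (ha : a < m) : (m - 1 + (a + 1)) % m = a := by
  have : m - 1 + (a + 1) = a + m := by omega
  rw [this, Nat.add_mod_right, Nat.mod_eq_of_lt ha]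

-- Evaluation lemmas
lemma pag0 {m k q b : ℕ} : pag m k q b 0 = (b + ssv k q) % m := by
  unfold pag; rw [if_pos rfl]

lemma pag1 {m k q b : ℕ} :
    pag m k q b 1 = if q = k - 1 then tw m b else (b + uuv q) % m := by
  unfold pag; rw [if_neg one_ne_zero]

lemma ssv_of_edge {k q : ℕ} (h : q = 0 ∨ q = k - 1) : ssv k q = 0 := by
  unfold ssv; rw [if_pos h]

lemma ssv_of_mid {k q : ℕ} (h0 : q ≠ 0) (h1 : q ≠ k - 1) : ssv k q = 2 := by
  unfold ssv; rw [if_neg (by tauto)]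

lemma uuv_of_zero : uuv 0 = 2 := by unfold uuv; rw [if_pos rfl]

lemma uuv_of_pos {q : ℕ} (h : q ≠ 0) : uuv q = 0 := by unfold uuv; rw [if_neg h]

lemma tw_last {m : ℕ} : tw m (m - 1) = 0 := by unfold tw; rw [if_pos rfl]

lemma tw_pen {m : ℕ} (hm : 2 ≤ m) : tw m (m - 2) = 1 := by
  unfold tw; rw [if_neg (by omega), if_pos rfl]

lemma tw_main {m b : ℕ} (h1 : b ≠ m - 1) (h2 : b ≠ m - 2) : tw m b = b + 2 := by
  unfold tw; rw [if_neg h1, if_neg h2]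

-- Page distinctness lemmas
section Pages
variable {m k : ℕ}

/-- P1: within a slot pair -/
lemma pag_P1 (hm : 4 ≤ m) {q b : ℕ} (hq : q < k) (hb : b < m) :
    pag m k q b 0 ≠ pag m k q b 1 := by
  rw [pag0, pag1]
  by_cases hq1 : q = k - 1
  · rw [if_pos hq1, ssv_of_edge (Or.inr hq1), Nat.mod_eq_of_lt (by omega)]
    by_cases h1 : b = m - 1
    · rw [h1, tw_last]; omega
    · by_cases h2 : b = m - 2
      · rw [h2, tw_pen (by omega)]; omega
      · rw [tw_main h1 h2]; omega
  · rw [if_neg hq1]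
    by_cases hq0 : q = 0
    · rw [ssv_of_edge (Or.inl hq0), hq0, uuv_of_zero]
      exact mod_ne_mod (by omega) (by omega) (by omega)
    · rw [ssv_of_mid hq0 hq1, uuv_of_pos hq0]
      exact mod_ne_mod (by omega) (by omega) (by omega)

/-- P2: odd slot to next even slot, same window -/
lemma pag_P2 (hm : 4 ≤ m) {q b : ℕ} (hq : q < k) (hb : b + 1 < m) :
    pag m k q b 1 ≠ pag m k q (b + 1) 0 := by
  rw [pag0, pag1]
  by_cases hq1 : q = k - 1
  · rw [if_pos hq1, ssv_of_edge (Or.inr hq1), Nat.mod_eq_of_lt (by omega)]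
    by_cases h1 : b = m - 1
    · omega
    · by_cases h2 : b = m - 2
      · rw [h2, tw_pen (by omega)]; omega
      · rw [tw_main h1 h2]; omega
  · rw [if_neg hq1]
    by_cases hq0 : q = 0
    · rw [ssv_of_edge (Or.inl hq0), hq0, uuv_of_zero,
        show b + 1 + 0 = b + 1 from by omega]
      exact mod_ne_mod (by omega) (by omega) (by omega)
    · rw [ssv_of_mid hq0 hq1, uuv_of_pos hq0,
        show b + 1 + 2 = b + 3 from by omega]
      exact mod_ne_mod (by omega) (by omega) (by omega)

/-- P3: window boundary, consecutive -/
lemma pag_P3 (hm : 4 ≤ m) {q : ℕ} (hq : q + 1 < k) :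
    pag m k q (m - 1) 1 ≠ pag m k (q + 1) 0 0 := by
  rw [pag0, pag1, if_neg (by omega)]
  have hs : ssv k (q + 1) ≤ 2 := by unfold ssv; split_ifs <;> omega
  rw [Nat.mod_eq_of_lt (show 0 + ssv k (q + 1) < m from by omega)]
  by_cases hq0 : q = 0
  · rw [hq0, uuv_of_zero, mod_self_add (show 1 < m from by omega)]
    unfold ssv; split_ifs <;> omega
  · rw [uuv_of_pos hq0, show m - 1 + 0 = m - 1 from by omega,
      Nat.mod_eq_of_lt (by omega)]
    unfold ssv; split_ifs <;> omega

/-- P4: two-apart even slots, same window -/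
lemma pag_P4 (hm : 4 ≤ m) {q b : ℕ} (hb : b + 1 < m) :
    pag m k q b 0 ≠ pag m k q (b + 1) 0 := by
  rw [pag0, pag0]
  have hs : ssv k q ≤ 2 := by unfold ssv; split_ifs <;> omega
  rw [show b + 1 + ssv k q = b + (ssv k q + 1) from by omega]
  exact mod_ne_mod (by omega) (by omega) (by omega)

/-- P5: two-apart odd slots, same window -/
lemma pag_P5 (hm : 4 ≤ m) {q b : ℕ} (hq : q < k) (hb : b + 1 < m) :
    pag m k q b 1 ≠ pag m k q (b + 1) 1 := by
  rw [pag1, pag1]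
  by_cases hq1 : q = k - 1
  · rw [if_pos hq1, if_pos hq1]
    by_cases h1 : b = m - 2
    · rw [h1, tw_pen (by omega), show m - 2 + 1 = m - 1 from by omega, tw_last]; omega
    · have h2 : b ≠ m - 1 := by omega
      rw [tw_main h2 h1]
      by_cases h3 : b + 1 = m - 2
      · rw [h3, tw_pen (by omega)]; omega
      · rw [tw_main (by omega) h3]; omega
  · rw [if_neg hq1, if_neg hq1]
    rcases Nat.eq_zero_or_pos q with hq0 | hq0
    · rw [hq0, uuv_of_zero, show b + 1 + 2 = b + 3 from by omega]
      exact mod_ne_mod (by omega) (by omega) (by omega)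
    · rw [uuv_of_pos (by omega), show b + 1 + 0 = b + 1 from by omega]
      exact mod_ne_mod (by omega) (by omega) (by omega)

/-- P6: two-apart even slots across boundary -/
lemma pag_P6 (hm : 4 ≤ m) {q : ℕ} (hq : q + 1 < k) :
    pag m k q (m - 1) 0 ≠ pag m k (q + 1) 0 0 := by
  rw [pag0, pag0]
  have hs1 : ssv k (q + 1) ≤ 2 := by unfold ssv; split_ifs <;> omega
  rw [Nat.mod_eq_of_lt (show 0 + ssv k (q + 1) < m from by omega)]
  by_cases hq0 : q = 0
  · rw [ssv_of_edge (Or.inl hq0), show m - 1 + 0 = m - 1 from by omega,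
      Nat.mod_eq_of_lt (by omega)]
    omega
  · have hqk : q ≠ k - 1 := by omega
    rw [ssv_of_mid hq0 hqk, show m - 1 + 2 = m - 1 + (1 + 1) from by omega,
      mod_self_add (show 1 < m from by omega)]
    unfold ssv; split_ifs <;> omega

/-- P7: two-apart odd slots across boundary -/
lemma pag_P7 (hm : 4 ≤ m) {q : ℕ} (hq : q + 1 < k) :
    pag m k q (m - 1) 1 ≠ pag m k (q + 1) 0 1 := by
  rw [pag1, pag1, if_neg (by omega)]
  by_cases hq2 : q + 1 = k - 1
  · rw [if_pos hq2]
    have htw : tw m 0 = 2 := by rw [tw_main (by omega) (by omega)]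
    rw [htw]
    by_cases hq0 : q = 0
    · rw [hq0, uuv_of_zero, mod_self_add (show 1 < m from by omega)]; omega
    · rw [uuv_of_pos hq0, show m - 1 + 0 = m - 1 from by omega,
        Nat.mod_eq_of_lt (by omega)]
      omega
  · rw [if_neg hq2, uuv_of_pos (q := q + 1) (by omega),
      Nat.mod_eq_of_lt (show 0 + 0 < m from by omega)]
    by_cases hq0 : q = 0
    · rw [hq0, uuv_of_zero, mod_self_add (show 1 < m from by omega)]; omega
    · rw [uuv_of_pos hq0, show m - 1 + 0 = m - 1 from by omega,
        Nat.mod_eq_of_lt (by omega)]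
      omega

end Pages


end UpperDefs

section Seq

def qof (m t : ℕ) : ℕ := t / (2 * m)
def bof (m t : ℕ) : ℕ := t % (2 * m) / 2
def cof (t : ℕ) : ℕ := t % 2

lemma decomp {m : ℕ} (hm : 0 < m) (t : ℕ) :
    t = 2 * m * qof m t + 2 * bof m t + cof t ∧ bof m t < m ∧ cof t < 2 := by
  have h0 := Nat.div_add_mod t (2 * m)
  have h2 : t % (2 * m) < 2 * m := Nat.mod_lt _ (by omega)
  unfold qof bof cof
  have h3 : 2 * (m * (t / (2 * m))) + t % (2 * m) = t := by
    calc 2 * (m * (t / (2 * m))) + t % (2 * m)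
        = 2 * m * (t / (2 * m)) + t % (2 * m) := by ring
      _ = t := h0
  refine ⟨?_, by omega, by omega⟩
  have h5 : 2 * m * (t / (2 * m)) = 2 * (m * (t / (2 * m))) := by ring
  rw [h5]
  omega

lemma qof_eval {m : ℕ} (k : ℕ) (q : ℕ) {b c : ℕ} (hm : 0 < m) (hb : b < m) (hc : c < 2) :
    qof m (2 * m * q + 2 * b + c) = q := by
  unfold qof
  rw [show 2 * m * q + 2 * b + c = 2 * m * q + (2 * b + c) from by ring,
    Nat.mul_add_div (by omega), Nat.div_eq_of_lt (by omega)]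
  omega

lemma modt_eval {m : ℕ} (q : ℕ) {b c : ℕ} (hm : 0 < m) (hb : b < m) (hc : c < 2) :
    (2 * m * q + 2 * b + c) % (2 * m) = 2 * b + c := by
  rw [show 2 * m * q + 2 * b + c = 2 * m * q + (2 * b + c) from by ring,
    Nat.mul_add_mod, Nat.mod_eq_of_lt (by omega)]

lemma bof_eval {m : ℕ} (q : ℕ) {b c : ℕ} (hm : 0 < m) (hb : b < m) (hc : c < 2) :
    bof m (2 * m * q + 2 * b + c) = b := by
  unfold bof
  rw [modt_eval q hm hb hc]
  omega

lemma cof_eval {m : ℕ} (q : ℕ) {b c : ℕ} (hm : 0 < m) (hb : b < m) (hc : c < 2) :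
    cof (2 * m * q + 2 * b + c) = c := by
  unfold cof
  have : 2 * m * q + 2 * b + c = 2 * (m * q + b) + c := by ring
  omega

def pgt (m k t : ℕ) : ℕ := pag m k (qof m t) (bof m t) (cof t)
def lvt (m k t : ℕ) : ℕ := lev k (qof m t) (cof t)

lemma pgt_eval {m : ℕ} (k : ℕ) (q : ℕ) {b c : ℕ} (hm : 0 < m) (hb : b < m) (hc : c < 2) :
    pgt m k (2 * m * q + 2 * b + c) = pag m k q b c := by
  unfold pgt
  rw [qof_eval k q hm hb hc, bof_eval q hm hb hc, cof_eval q hm hb hc]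

lemma lvt_eval {m : ℕ} (k : ℕ) (q : ℕ) {b c : ℕ} (hm : 0 < m) (hb : b < m) (hc : c < 2) :
    lvt m k (2 * m * q + 2 * b + c) = lev k q c := by
  unfold lvt
  rw [qof_eval k q hm hb hc, cof_eval q hm hb hc]

lemma lev0 {k q : ℕ} : lev k q 0 = xx k q := by unfold lev; rw [if_pos rfl]

lemma lev1 {k q : ℕ} : lev k q 1 = xx k q + k := by unfold lev; rw [if_neg one_ne_zero]

lemma dstar_ne {p p' : ℕ} (h : p ≠ p') :
    2 * dstar p p' = (if p = 0 then 0 else 2) + (if p' = 0 then 0 else 2) := by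
  unfold dstar; split_ifs <;> omega

lemma dstar_le_two (p p' : ℕ) : dstar p p' ≤ 2 := by
  unfold dstar; split_ifs <;> omega

lemma dstar_tri {p p' p'' : ℕ} (h1 : p ≠ p') (h2 : p' ≠ p'') (h3 : p ≠ p'') :
    dstar p p' + dstar p' p'' ≤ 2 + dstar p p'' := by
  unfold dstar; split_ifs <;> omega

lemma dW {k p p' ℓ ℓ' : ℕ} (hp : p ≠ p')
    (h : (ℓ < k ∧ k ≤ ℓ' ∧ ℓ' < 2 * k) ∨ (ℓ' < k ∧ k ≤ ℓ ∧ ℓ < 2 * k)) :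
    2 * (dstar p p' + Nat.dist ℓ ℓ') =
      (Nat.dist (2 * ℓ) (2 * k - 1) + (if p = 0 then 0 else 2)) +
      (Nat.dist (2 * ℓ') (2 * k - 1) + (if p' = 0 then 0 else 2)) := by
  have hd := dstar_ne hp
  have hlev : 2 * Nat.dist ℓ ℓ' = Nat.dist (2 * ℓ) (2 * k - 1) + Nat.dist (2 * ℓ') (2 * k - 1) := by
    simp only [Nat.dist]; omega
  omega

/-- the vertex sequence -/
def ordt (m n k : ℕ) (hm : 4 ≤ m) (hk : 0 < k) (hn : n = 2 * k) (t : ℕ) : Fin m × Fin n :=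
  (⟨pgt m k t, pag_lt hm k _ _ (decomp (by omega) t).2.1⟩,
   ⟨lvt m k t, by rw [hn]; exact lev_lt hk _ _⟩)

section StepLemmas
variable {m n k : ℕ} (hm : 4 ≤ m) (hk : 0 < k) (hn : n = 2 * k)
include hm hk

lemma q_lt {t : ℕ} (ht : t < 2 * m * k) : qof m t < k := by
  obtain ⟨heq, hb, hc⟩ := decomp (show 0 < m by omega) t
  by_contra hcon
  have : 2 * m * k ≤ 2 * m * qof m t := Nat.mul_le_mul_left _ (by omega)
  omega

include hn

lemma dB_ordt (t t' : ℕ) :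
    dB (ordt m n k hm hk hn t) (ordt m n k hm hk hn t') =
      dstar (pgt m k t) (pgt m k t') + Nat.dist (lvt m k t) (lvt m k t') := rfl

lemma Wt_ordt (t : ℕ) :
    Wt (ordt m n k hm hk hn t) =
      Nat.dist (2 * lvt m k t) (n - 1) + (if pgt m k t = 0 then 0 else 2) := rfl

lemma LA {t : ℕ} (ht : t + 1 < 2 * m * k) :
    2 * dB (ordt m n k hm hk hn t) (ordt m n k hm hk hn (t + 1)) =
      Wt (ordt m n k hm hk hn t) + Wt (ordt m n k hm hk hn (t + 1)) := by
  have hm0 : 0 < m := by omega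
  obtain ⟨heq, hb, hc⟩ := decomp hm0 t
  set q := qof m t with hqd
  set b := bof m t with hbd
  set c := cof t with hcd
  have hq : q < k := q_lt hm hk (by omega)
  have hxq := xx_lt hk q
  rw [dB_ordt, Wt_ordt, Wt_ordt, hn]
  rcases (by omega : c = 0 ∨ c = 1) with hc0 | hc1
  · have he2 : t + 1 = 2 * m * q + 2 * b + 1 := by omega
    have he1 : t = 2 * m * q + 2 * b + 0 := by omega
    rw [he2, he1, pgt_eval k q hm0 hb (by omega), pgt_eval k q hm0 hb (by omega),
      lvt_eval k q hm0 hb (by omega), lvt_eval k q hm0 hb (by omega)]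
    simp only [lev0, lev1]
    exact dW (pag_P1 hm hq hb) (Or.inl ⟨hxq, by omega, by omega⟩)
  · by_cases hbm : b + 1 < m
    · have he2 : t + 1 = 2 * m * q + 2 * (b + 1) + 0 := by omega
      have he1 : t = 2 * m * q + 2 * b + 1 := by omega
      rw [he2, he1, pgt_eval k q hm0 hb (by omega), pgt_eval k q hm0 hbm (by omega),
        lvt_eval k q hm0 hb (by omega), lvt_eval k q hm0 hbm (by omega)]
      simp only [lev0, lev1]
      exact dW (pag_P2 hm hq hbm) (Or.inr ⟨hxq, by omega, by omega⟩)
    · have hbm1 : b = m - 1 := by omega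
      have hmul : 2 * m * (q + 1) = 2 * m * q + 2 * m := by ring
      have hq1 : q + 1 < k := by
        have h5 := q_lt hm hk (show t + 1 < 2 * m * k from ht)
        have he2 : t + 1 = 2 * m * (q + 1) + 2 * 0 + 0 := by omega
        rw [he2, qof_eval k (q + 1) hm0 (by omega) (by omega)] at h5
        exact h5
      have he2 : t + 1 = 2 * m * (q + 1) + 2 * 0 + 0 := by omega
      have he1 : t = 2 * m * q + 2 * b + 1 := by omega
      have hxq1 := xx_lt hk (q + 1)
      rw [he2, he1, pgt_eval k q hm0 hb (by omega), pgt_eval k (q+1) hm0 (by omega) (by omega),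
        lvt_eval k q hm0 hb (by omega), lvt_eval k (q+1) hm0 (by omega) (by omega)]
      simp only [lev0, lev1]
      rw [hbm1]
      exact dW (pag_P3 hm hq1) (Or.inr ⟨hxq1, by omega, by omega⟩)

lemma LB {t : ℕ} (ht : t + 2 < 2 * m * k) :
    dB (ordt m n k hm hk hn t) (ordt m n k hm hk hn (t + 1)) +
      dB (ordt m n k hm hk hn (t + 1)) (ordt m n k hm hk hn (t + 2)) ≤
    n + 2 + dB (ordt m n k hm hk hn t) (ordt m n k hm hk hn (t + 2)) := by
  have hm0 : 0 < m := by omega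
  obtain ⟨heq, hb, hc⟩ := decomp hm0 t
  set q := qof m t with hqd
  set b := bof m t with hbd
  set c := cof t with hcd
  have hq : q < k := q_lt hm hk (by omega)
  have hxq := xx_lt hk q
  rw [dB_ordt, dB_ordt, dB_ordt, hn]
  rcases (by omega : c = 0 ∨ c = 1) with hc0 | hc1
  · by_cases hbm : b + 1 < m
    · have he2 : t + 2 = 2 * m * q + 2 * (b + 1) + 0 := by omega
      have he1 : t + 1 = 2 * m * q + 2 * b + 1 := by omega
      have he0 : t = 2 * m * q + 2 * b + 0 := by omega
      rw [he2, he1, he0, pgt_eval k q hm0 hb (by omega), pgt_eval k q hm0 hb (by omega),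
        pgt_eval k q hm0 hbm (by omega), lvt_eval k q hm0 hb (by omega),
        lvt_eval k q hm0 hb (by omega), lvt_eval k q hm0 hbm (by omega)]
      simp only [lev0, lev1]
      have htri := dstar_tri (pag_P1 hm hq hb) (pag_P2 hm hq hbm) (pag_P4 hm hbm)
      simp only [Nat.dist]
      omega
    · have hbm1 : b = m - 1 := by omega
      have hmul : 2 * m * (q + 1) = 2 * m * q + 2 * m := by ring
      have hq1 : q + 1 < k := by
        have h5 := q_lt hm hk (show t + 2 < 2 * m * k from ht)
        have he2 : t + 2 = 2 * m * (q + 1) + 2 * 0 + 0 := by omega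
        rw [he2, qof_eval k (q + 1) hm0 (by omega) (by omega)] at h5
        exact h5
      have hxq1 := xx_lt hk (q + 1)
      have he2 : t + 2 = 2 * m * (q + 1) + 2 * 0 + 0 := by omega
      have he1 : t + 1 = 2 * m * q + 2 * b + 1 := by omega
      have he0 : t = 2 * m * q + 2 * b + 0 := by omega
      rw [he2, he1, he0, pgt_eval k q hm0 hb (by omega), pgt_eval k q hm0 hb (by omega),
        pgt_eval k (q + 1) hm0 (by omega) (by omega), lvt_eval k q hm0 hb (by omega),
        lvt_eval k q hm0 hb (by omega), lvt_eval k (q + 1) hm0 (by omega) (by omega),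
        lev0, lev1]
      rw [hbm1]
      have htri := dstar_tri (pag_P1 hm hq (show m - 1 < m from by omega))
        (pag_P3 hm hq1) (pag_P6 hm hq1)
      simp only [Nat.dist]
      omega
  · by_cases hbm : b + 1 < m
    · have he2 : t + 2 = 2 * m * q + 2 * (b + 1) + 1 := by omega
      have he1 : t + 1 = 2 * m * q + 2 * (b + 1) + 0 := by omega
      have he0 : t = 2 * m * q + 2 * b + 1 := by omega
      rw [he2, he1, he0, pgt_eval k q hm0 hb (by omega), pgt_eval k q hm0 hbm (by omega),
        pgt_eval k q hm0 hbm (by omega), lvt_eval k q hm0 hb (by omega),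
        lvt_eval k q hm0 hbm (by omega), lvt_eval k q hm0 hbm (by omega)]
      simp only [lev0, lev1]
      have htri := dstar_tri (pag_P2 hm hq hbm) (pag_P1 hm hq hbm) (pag_P5 hm hq hbm)
      simp only [Nat.dist]
      omega
    · have hbm1 : b = m - 1 := by omega
      have hmul : 2 * m * (q + 1) = 2 * m * q + 2 * m := by ring
      have hq1 : q + 1 < k := by
        have h5 := q_lt hm hk (show t + 1 < 2 * m * k from by omega)
        have he1 : t + 1 = 2 * m * (q + 1) + 2 * 0 + 0 := by omega
        rw [he1, qof_eval k (q + 1) hm0 (by omega) (by omega)] at h5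
        exact h5
      have hxq1 := xx_lt hk (q + 1)
      have he2 : t + 2 = 2 * m * (q + 1) + 2 * 0 + 1 := by omega
      have he1 : t + 1 = 2 * m * (q + 1) + 2 * 0 + 0 := by omega
      have he0 : t = 2 * m * q + 2 * b + 1 := by omega
      rw [he2, he1, he0, pgt_eval k q hm0 hb (by omega),
        pgt_eval k (q + 1) hm0 (by omega) (by omega),
        pgt_eval k (q + 1) hm0 (by omega) (by omega), lvt_eval k q hm0 hb (by omega),
        lvt_eval k (q + 1) hm0 (by omega) (by omega),
        lvt_eval k (q + 1) hm0 (by omega) (by omega)]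
      simp only [lev0, lev1]
      rw [hbm1]
      have htri := dstar_tri (pag_P3 hm hq1)
        (pag_P1 hm hq1 (show (0:ℕ) < m from by omega)) (pag_P7 hm hq1)
      simp only [Nat.dist]
      omega

lemma LC {t : ℕ} (ht : t + 3 < 2 * m * k) :
    dB (ordt m n k hm hk hn t) (ordt m n k hm hk hn (t + 1)) +
      dB (ordt m n k hm hk hn (t + 1)) (ordt m n k hm hk hn (t + 2)) +
      dB (ordt m n k hm hk hn (t + 2)) (ordt m n k hm hk hn (t + 3)) ≤ 4 * k + 5 := by
  have hm0 : 0 < m := by omega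
  obtain ⟨heq, hb, hc⟩ := decomp hm0 t
  set q := qof m t with hqd
  set b := bof m t with hbd
  set c := cof t with hcd
  have hq : q < k := q_lt hm hk (by omega)
  have hxq := xx_lt hk q
  rw [dB_ordt, dB_ordt, dB_ordt]
  have hs0 := dstar_le_two (pgt m k t) (pgt m k (t + 1))
  have hs1 := dstar_le_two (pgt m k (t + 1)) (pgt m k (t + 2))
  have hs2 := dstar_le_two (pgt m k (t + 2)) (pgt m k (t + 3))
  set p0 := pgt m k t
  set p1 := pgt m k (t + 1)
  set p2 := pgt m k (t + 2)
  set p3 := pgt m k (t + 3)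
  have hmul : 2 * m * (q + 1) = 2 * m * q + 2 * m := by ring
  rcases (by omega : c = 0 ∨ c = 1) with hc0 | hc1
  · by_cases hbm : b + 1 < m
    · have he3 : t + 3 = 2 * m * q + 2 * (b + 1) + 1 := by omega
      have he2 : t + 2 = 2 * m * q + 2 * (b + 1) + 0 := by omega
      have he1 : t + 1 = 2 * m * q + 2 * b + 1 := by omega
      have he0 : t = 2 * m * q + 2 * b + 0 := by omega
      rw [he3, he2, he1, he0, lvt_eval k q hm0 hb (by omega),
        lvt_eval k q hm0 hb (by omega), lvt_eval k q hm0 hbm (by omega),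
        lvt_eval k q hm0 hbm (by omega)]
      simp only [lev0, lev1]
      simp only [Nat.dist]
      omega
    · have hq1 : q + 1 < k := by
        have h5 := q_lt hm hk (show t + 2 < 2 * m * k from by omega)
        have he2 : t + 2 = 2 * m * (q + 1) + 2 * 0 + 0 := by omega
        rw [he2, qof_eval k (q + 1) hm0 (by omega) (by omega)] at h5
        exact h5
      have hxq1 := xx_lt hk (q + 1)
      have he3 : t + 3 = 2 * m * (q + 1) + 2 * 0 + 1 := by omega
      have he2 : t + 2 = 2 * m * (q + 1) + 2 * 0 + 0 := by omega
      have he1 : t + 1 = 2 * m * q + 2 * b + 1 := by omega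
      have he0 : t = 2 * m * q + 2 * b + 0 := by omega
      rw [he3, he2, he1, he0, lvt_eval k q hm0 hb (by omega),
        lvt_eval k q hm0 hb (by omega), lvt_eval k (q + 1) hm0 (by omega) (by omega),
        lvt_eval k (q + 1) hm0 (by omega) (by omega)]
      simp only [lev0, lev1]
      simp only [Nat.dist]
      omega
  · by_cases hbm : b + 1 < m
    · by_cases hbm2 : b + 2 < m
      · have he3 : t + 3 = 2 * m * q + 2 * (b + 2) + 0 := by omega
        have he2 : t + 2 = 2 * m * q + 2 * (b + 1) + 1 := by omega
        have he1 : t + 1 = 2 * m * q + 2 * (b + 1) + 0 := by omega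
        have he0 : t = 2 * m * q + 2 * b + 1 := by omega
        rw [he3, he2, he1, he0, lvt_eval k q hm0 hb (by omega),
          lvt_eval k q hm0 hbm (by omega), lvt_eval k q hm0 hbm (by omega),
          lvt_eval k q hm0 hbm2 (by omega)]
        simp only [lev0, lev1]
        simp only [Nat.dist]
        omega
      · have hq1 : q + 1 < k := by
          have h5 := q_lt hm hk (show t + 3 < 2 * m * k from ht)
          have he3 : t + 3 = 2 * m * (q + 1) + 2 * 0 + 0 := by omega
          rw [he3, qof_eval k (q + 1) hm0 (by omega) (by omega)] at h5
          exact h5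
        have hxq1 := xx_lt hk (q + 1)
        have he3 : t + 3 = 2 * m * (q + 1) + 2 * 0 + 0 := by omega
        have he2 : t + 2 = 2 * m * q + 2 * (b + 1) + 1 := by omega
        have he1 : t + 1 = 2 * m * q + 2 * (b + 1) + 0 := by omega
        have he0 : t = 2 * m * q + 2 * b + 1 := by omega
        rw [he3, he2, he1, he0, lvt_eval k q hm0 hb (by omega),
          lvt_eval k q hm0 hbm (by omega), lvt_eval k q hm0 hbm (by omega),
          lvt_eval k (q + 1) hm0 (by omega) (by omega)]
        simp only [lev0, lev1]
        simp only [Nat.dist]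
        omega
    · have hq1 : q + 1 < k := by
        have h5 := q_lt hm hk (show t + 1 < 2 * m * k from by omega)
        have he1 : t + 1 = 2 * m * (q + 1) + 2 * 0 + 0 := by omega
        rw [he1, qof_eval k (q + 1) hm0 (by omega) (by omega)] at h5
        exact h5
      have hxq1 := xx_lt hk (q + 1)
      have he3 : t + 3 = 2 * m * (q + 1) + 2 * 1 + 0 := by omega
      have he2 : t + 2 = 2 * m * (q + 1) + 2 * 0 + 1 := by omega
      have he1 : t + 1 = 2 * m * (q + 1) + 2 * 0 + 0 := by omega
      have he0 : t = 2 * m * q + 2 * b + 1 := by omega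
      rw [he3, he2, he1, he0, lvt_eval k q hm0 hb (by omega),
        lvt_eval k (q + 1) hm0 (by omega) (by omega),
        lvt_eval k (q + 1) hm0 (by omega) (by omega),
        lvt_eval k (q + 1) hm0 (show (1:ℕ) < m from by omega) (by omega)]
      simp only [lev0, lev1]
      simp only [Nat.dist]
      omega

end StepLemmas

end Seq

section Inverse

def xinv (k j : ℕ) : ℕ := if j = k - 1 then 0 else if j = 0 then k - 1 else j
def twinv (m p : ℕ) : ℕ := if p = 0 then m - 1 else if p = 1 then m - 2 else p - 2

lemma xinv_lt {k j : ℕ} (hk : 0 < k) (hj : j < k) : xinv k j < k := by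
  unfold xinv; split_ifs <;> omega

lemma xx_xinv {k j : ℕ} (hk : 0 < k) (hj : j < k) : xx k (xinv k j) = j := by
  unfold xx xinv; split_ifs <;> omega

lemma twinv_lt {m p : ℕ} (hm : 4 ≤ m) (hp : p < m) : twinv m p < m := by
  unfold twinv; split_ifs <;> omega

lemma tw_twinv {m p : ℕ} (hm : 4 ≤ m) (hp : p < m) : tw m (twinv m p) = p := by
  unfold tw twinv; split_ifs <;> omega

lemma add_sub_mod {m p s : ℕ} (hp : p < m) (hs : s ≤ m) :
    ((p + (m - s)) % m + s) % m = p := by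
  rw [Nat.mod_add_mod, show p + (m - s) + s = p + m from by omega,
    Nat.add_mod_right, Nat.mod_eq_of_lt hp]

/-- the position of vertex `(p, ℓ)` in the ordering -/
def idxv (m k p ℓ : ℕ) : ℕ :=
  if ℓ < k then
    2 * m * xinv k ℓ + 2 * ((p + (m - ssv k (xinv k ℓ))) % m) + 0
  else
    2 * m * xinv k (ℓ - k) +
      2 * (if xinv k (ℓ - k) = k - 1 then twinv m p
           else (p + (m - uuv (xinv k (ℓ - k)))) % m) + 1

lemma idxv_lt {m k p ℓ : ℕ} (hm : 4 ≤ m) (hk : 0 < k) (hp : p < m) (hl : ℓ < 2 * k) :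
    idxv m k p ℓ < 2 * m * k := by
  have hm0 : 0 < m := by omega
  have key : ∀ q B : ℕ, q < k → B < m → 2 * m * q + 2 * B + 1 < 2 * m * k := by
    intro q B hq hB
    have h3 : 2 * m * q + 2 * m ≤ 2 * m * k := by
      calc 2 * m * q + 2 * m = 2 * m * (q + 1) := by ring
        _ ≤ 2 * m * k := Nat.mul_le_mul_left _ (by omega)
    omega
  unfold idxv
  split_ifs with h h2
  · have := key (xinv k ℓ) ((p + (m - ssv k (xinv k ℓ))) % m)
      (xinv_lt hk h) (Nat.mod_lt _ hm0)
    omega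
  · exact key _ _ (xinv_lt hk (by omega)) (twinv_lt hm hp)
  · exact key _ _ (xinv_lt hk (by omega)) (Nat.mod_lt _ hm0)

lemma ordt_idxv {m n k : ℕ} (hm : 4 ≤ m) (hk : 0 < k) (hn : n = 2 * k)
    (v : Fin m × Fin n) :
    ordt m n k hm hk hn (idxv m k v.1.val v.2.val) = v := by
  have hm0 : 0 < m := by omega
  have hp : v.1.val < m := v.1.isLt
  have hl : v.2.val < 2 * k := by have := v.2.isLt; omega
  have hssv : ∀ q, ssv k q ≤ 2 := by intro q; unfold ssv; split_ifs <;> omega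
  have huuv : ∀ q, uuv q ≤ 2 := by intro q; unfold uuv; split_ifs <;> omega
  refine Prod.ext_iff.mpr ⟨Fin.val_injective ?_, Fin.val_injective ?_⟩ <;>
    unfold idxv <;> split_ifs with h h2
  -- page component
  · show pgt m k _ = v.1.val
    rw [pgt_eval k (xinv k v.2.val) hm0 (Nat.mod_lt _ hm0) (by omega), pag0,
      add_sub_mod hp (by have := hssv (xinv k v.2.val); omega)]
  · show pgt m k _ = v.1.val
    rw [pgt_eval k (xinv k (v.2.val - k)) hm0 (twinv_lt hm hp) (by omega), pag1,
      if_pos h2, tw_twinv hm hp]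
  · show pgt m k _ = v.1.val
    rw [pgt_eval k (xinv k (v.2.val - k)) hm0 (Nat.mod_lt _ hm0) (by omega), pag1,
      if_neg h2, add_sub_mod hp (by have := huuv (xinv k (v.2.val - k)); omega)]
  -- level component
  · show lvt m k _ = v.2.val
    rw [lvt_eval k (xinv k v.2.val) hm0 (Nat.mod_lt _ hm0) (by omega), lev0,
      xx_xinv hk h]
  · show lvt m k _ = v.2.val
    rw [lvt_eval k (xinv k (v.2.val - k)) hm0 (twinv_lt hm hp) (by omega), lev1,
      xx_xinv hk (by omega)]
    omega
  · show lvt m k _ = v.2.val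
    rw [lvt_eval k (xinv k (v.2.val - k)) hm0 (Nat.mod_lt _ hm0) (by omega), lev1,
      xx_xinv hk (by omega)]
    omega

lemma xx_last {k : ℕ} (hk : 0 < k) : xx k (k - 1) = 0 := by
  unfold xx; split_ifs <;> omega

lemma Wt_first {m n k : ℕ} (hm : 4 ≤ m) (hk : 0 < k) (hn : n = 2 * k) :
    Wt (ordt m n k hm hk hn 0) = 1 := by
  have hm0 : 0 < m := by omega
  rw [Wt_ordt hm hk hn]
  have h1 : pgt m k 0 = 0 := by
    unfold pgt qof bof cof
    simp only [Nat.zero_div, Nat.zero_mod]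
    rw [pag0, ssv_of_edge (Or.inl rfl)]
    simp
  have h2 : lvt m k 0 = k - 1 := by
    unfold lvt qof cof
    simp only [Nat.zero_div, Nat.zero_mod]
    rw [lev0, show xx k 0 = k - 1 from by unfold xx; rw [if_pos rfl]]
  rw [h1, h2, if_pos rfl, hn]
  simp [Nat.dist]
  omega

lemma Wt_last {m n k : ℕ} (hm : 4 ≤ m) (hk : 0 < k) (hn : n = 2 * k) :
    Wt (ordt m n k hm hk hn (2 * m * k - 1)) = 1 := by
  have hm0 : 0 < m := by omega
  have hmul : 2 * m * (k - 1) + 2 * m = 2 * m * k := by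
    calc 2 * m * (k - 1) + 2 * m = 2 * m * (k - 1 + 1) := by ring
      _ = 2 * m * k := by rw [show k - 1 + 1 = k from by omega]
  have hmk : 2 * m ≤ 2 * m * k := by
    calc 2 * m = 2 * m * 1 := by ring
      _ ≤ 2 * m * k := Nat.mul_le_mul_left _ hk
  have he : 2 * m * k - 1 = 2 * m * (k - 1) + 2 * (m - 1) + 1 := by omega
  rw [Wt_ordt hm hk hn, he, pgt_eval k (k - 1) hm0 (by omega) (by omega),
    lvt_eval k (k - 1) hm0 (by omega) (by omega), lev1, pag1, if_pos rfl, tw_last,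
    xx_last hk, if_pos rfl, hn]
  simp [Nat.dist]
  omega

end Inverse

lemma upper_bound {m n : ℕ} (k : ℕ) (hm : 4 ≤ m) (hk : 0 < k) (hn : n = 2 * k) :
    ∃ f : Fin m × Fin n → ℕ, IsRadioLabeling (bookGraph m n) (n + 1) f ∧
      span f = 2 * (m * k * k) + 2 * k - 1 := by
  have hm0 : 0 < m := by omega
  have hn0 : 0 < n := by omega
  set N := 2 * m * k with hN
  have hN0 : 0 < N := Nat.mul_pos (by omega) hk
  set O : ℕ → Fin m × Fin n := ordt m n k hm hk hn with hO
  set g : ℕ → ℕ := fun t => n + 2 - dB (O t) (O (t + 1)) with hg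
  set L : ℕ → ℕ := fun t => ∑ s ∈ Finset.range t, g s with hL
  set I : Fin m × Fin n → ℕ := fun v => idxv m k v.1.val v.2.val with hI
  have hIlt : ∀ v, I v < N :=
    fun v => idxv_lt hm hk v.1.isLt (by have := v.2.isLt; omega)
  have hOI : ∀ v, O (I v) = v := fun v => ordt_idxv hm hk hn v
  have hcard : Fintype.card (Fin m × Fin n) = N := by
    simp only [Fintype.card_prod, Fintype.card_fin, hN, hn]; ring
  set OF : Fin N → Fin m × Fin n := fun t => O t.val with hOF
  have hsurj : Function.Surjective OF := fun v => ⟨⟨I v, hIlt v⟩, hOI v⟩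
  have hbij : Function.Bijective OF :=
    (Fintype.bijective_iff_surjective_and_card OF).mpr ⟨hsurj, by simp [hcard]⟩
  have hIO : ∀ t, t < N → I (O t) = t := by
    intro t ht
    have h1 : OF ⟨I (O t), hIlt _⟩ = OF ⟨t, ht⟩ := hOI (O t)
    simpa using congrArg Fin.val (hbij.1 h1)
  have hdBd : ∀ t t', dB (O t) (O t') ≤ n + 1 := fun t t' => dB_le_diam hn0 _ _
  have hgd : ∀ t, g t + dB (O t) (O (t + 1)) = n + 2 := by
    intro t; have := hdBd t (t + 1); simp only [hg]; omega
  have hLsucc : ∀ t, L (t + 1) = L t + g t := fun t => Finset.sum_range_succ g t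
  have hLmono : ∀ {a b : ℕ}, a ≤ b → L a ≤ L b := by
    intro a b hab
    exact Finset.sum_le_sum_of_subset (Finset.range_subset_range.mpr hab)
  set f : Fin m × Fin n → ℕ := fun v => L (I v) with hf
  have haux : ∀ u v : Fin m × Fin n, u ≠ v → I u < I v →
      ((n : ℤ) + 1) + 1 - (bookGraph m n).dist u v ≤ (f v : ℤ) - (f u : ℤ) := by
    intro u v huv hlt
    have hjN : I v < N := hIlt v
    have hu : O (I u) = u := hOI u
    have hv : O (I v) = v := hOI v
    have hdd : (dB u v : ℤ) ≤ ((bookGraph m n).dist u v : ℤ) := by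
      exact_mod_cast dB_le_dist hm0 u v
    have hdiam : dB u v ≤ n + 1 := dB_le_diam hn0 u v
    rcases (by omega : I v = I u + 1 ∨ I v = I u + 2 ∨ I u + 3 ≤ I v) with h1 | h1 | h1
    · have e1 : f v = f u + g (I u) := by
        simp only [hf, h1]; rw [hLsucc]
      have e2 := hgd (I u)
      rw [← h1, hu, hv] at e2
      have e3 : (f v : ℤ) - f u = (g (I u) : ℤ) := by rw [e1]; push_cast; ring
      omega
    · have e1 : f v = f u + (g (I u) + g (I u + 1)) := by
        simp only [hf, h1]
        rw [show I u + 2 = I u + 1 + 1 from by omega, hLsucc, hLsucc]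
        ring
      have hLB := LB hm hk hn (t := I u) (by omega)
      rw [← hO] at hLB
      rw [hu, ← h1, hv] at hLB
      have e2 := hgd (I u)
      rw [hu] at e2
      have e3 := hgd (I u + 1)
      rw [show I u + 1 + 1 = I u + 2 from by omega, ← h1, hv] at e3
      have e4 : (f v : ℤ) - f u = (g (I u) : ℤ) + g (I u + 1) := by
        rw [e1]; push_cast; ring
      have hd2 : dB u (O (I u + 1)) ≤ n + 1 := by
        have := hdBd (I u) (I u + 1); rwa [hu] at this
      have hd3 : dB (O (I u + 1)) v ≤ n + 1 := by
        have := hdBd (I u + 1) (I v); rwa [hv] at this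
      omega
    · have hfu3 : L (I u + 3) ≤ L (I v) := hLmono (by omega)
      have e1 : L (I u + 3) = L (I u) + g (I u) + g (I u + 1) + g (I u + 2) := by
        rw [show I u + 3 = I u + 2 + 1 from by omega, hLsucc,
          show I u + 2 = I u + 1 + 1 from by omega, hLsucc, hLsucc]
      have hLC := LC hm hk hn (t := I u) (by omega)
      rw [← hO] at hLC
      have e2 := hgd (I u)
      have e3 := hgd (I u + 1)
      have e4 := hgd (I u + 2)
      rw [show I u + 1 + 1 = I u + 2 from by omega] at e3
      rw [show I u + 2 + 1 = I u + 3 from by omega] at e4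
      have hdbuv : 1 ≤ dB u v := dB_pos huv
      have a1 : f v = L (I v) := rfl
      have a2 : f u = L (I u) := rfl
      omega
  refine ⟨f, ?_, ?_⟩
  · intro u v huv
    have hIne : I u ≠ I v := fun h => huv (by rw [← hOI u, h, hOI v])
    rcases lt_or_gt_of_ne hIne with h | h
    · have h2 := haux u v huv h
      have hle : f u ≤ f v := hLmono (le_of_lt h)
      rw [abs_sub_comm, abs_of_nonneg (by push_cast; omega)]
      push_cast at h2 ⊢
      omega
    · have h2 := haux v u huv.symm h
      rw [SimpleGraph.dist_comm] at h2
      have hle : f v ≤ f u := hLmono (le_of_lt h)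
      rw [abs_of_nonneg (by push_cast; omega)]
      push_cast at h2 ⊢
      omega
  · have hNonempty : (Set.range f).Nonempty := ⟨f (O 0), ⟨O 0, rfl⟩⟩
    have hfmax : ∀ w ∈ Set.range f, w ≤ L (N - 1) := by
      rintro w ⟨v, rfl⟩
      exact hLmono (by have := hIlt v; omega)
    have hvalmax : f (O (N - 1)) = L (N - 1) := by
      simp only [hf]; rw [hIO (N - 1) (by omega)]
    have hsup : sSup (Set.range f) = L (N - 1) :=
      le_antisymm (csSup_le hNonempty hfmax)
        (le_csSup (Set.finite_range f).bddAbove ⟨O (N - 1), hvalmax⟩)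
    have hzero : f (O 0) = 0 := by
      simp only [hf]; rw [hIO 0 (by omega)]; simp [hL]
    have hinf : sInf (Set.range f) = 0 :=
      Nat.sInf_eq_zero.mpr (Or.inl ⟨O 0, hzero⟩)
    unfold span
    rw [hsup, hinf]
    -- compute L (N - 1)
    have hsum2 : ∑ t ∈ Finset.range (N - 1), (2 * (dB (O t) (O (t + 1)) : ℤ)) =
        2 * (∑ v : Fin m × Fin n, (Wt v : ℤ)) - 2 := by
      have hstep : ∀ t ∈ Finset.range (N - 1),
          (2 : ℤ) * (dB (O t) (O (t + 1)) : ℤ) = (Wt (O t) : ℤ) + (Wt (O (t + 1)) : ℤ) := by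
        intro t ht
        have := LA hm hk hn (t := t) (by have := Finset.mem_range.mp ht; omega)
        rw [← hO] at this
        exact_mod_cast this
      rw [Finset.sum_congr rfl hstep, sum_consec (fun t => (Wt (O t) : ℤ)) (N - 1),
        show N - 1 + 1 = N from by omega]
      have hWsum : ∑ t ∈ Finset.range N, (Wt (O t) : ℤ) =
          ∑ v : Fin m × Fin n, (Wt v : ℤ) := by
        rw [← Fin.sum_univ_eq_sum_range (fun t => (Wt (O t) : ℤ)) N]
        exact Fintype.sum_bijective OF hbij _ _ (fun t => rfl)
      rw [hWsum, show Wt (O 0) = 1 from Wt_first hm hk hn,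
        show Wt (O (N - 1)) = 1 from Wt_last hm hk hn]
      push_cast
      ring
    have hLval : (L (N - 1) : ℤ) =
        ((N : ℤ) - 1) * ((n : ℤ) + 2) - (∑ v : Fin m × Fin n, (Wt v : ℤ)) + 1 := by
      have hc : (L (N - 1) : ℤ) = ∑ t ∈ Finset.range (N - 1), (g t : ℤ) := by
        simp only [hL]; push_cast; rfl
      rw [hc]
      have hterm : ∀ t ∈ Finset.range (N - 1),
          (g t : ℤ) = ((n : ℤ) + 2) - (dB (O t) (O (t + 1)) : ℤ) := by
        intro t _
        have := hgd t
        omega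
      rw [Finset.sum_congr rfl hterm, Finset.sum_sub_distrib, Finset.sum_const,
        Finset.card_range]
      rw [← Finset.mul_sum] at hsum2
      have hS : ∑ t ∈ Finset.range (N - 1), (dB (O t) (O (t + 1)) : ℤ) =
          (∑ v : Fin m × Fin n, (Wt v : ℤ)) - 1 := by linarith
      rw [hS, nsmul_eq_mul, show ((N - 1 : ℕ) : ℤ) = (N : ℤ) - 1 from by omega]
      ring
    have hSWv : (∑ v : Fin m × Fin n, (Wt v : ℤ)) =
        (m : ℤ) * (2 * k * k) + 2 * k * (2 * ((m : ℤ) - 1)) := by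
      have := sum_Wt (m := m) (n := n) k hn
      have hcast : (∑ v : Fin m × Fin n, (Wt v : ℤ)) =
          ((∑ v : Fin m × Fin n, Wt v : ℕ) : ℤ) := by push_cast; rfl
      rw [hcast, this]
      push_cast
      rw [show ((m - 1 : ℕ) : ℤ) = (m : ℤ) - 1 from by omega]
    have hfinal : (L (N - 1) : ℤ) = 2 * ((m : ℤ) * k * k) + 2 * k - 1 := by
      rw [hLval, hSWv, show (N : ℤ) = 2 * (m : ℤ) * k from by
        simp only [hN]; push_cast; ring,
        show (n : ℤ) = 2 * (k : ℤ) from by exact_mod_cast hn]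
      ring
    have hc2 : ((2 * (m * k * k) + 2 * k - 1 : ℕ) : ℤ) = 2 * ((m : ℤ) * k * k) + 2 * k - 1 := by
      rw [Nat.cast_sub (by omega)]
      push_cast
      ring
    omega

end RB

theorem rnBook_eq (m n : ℕ) (hm : 4 ≤ m) (hn : Even n) (hn2 : 2 ≤ n) :
    rnBook m n = m * n ^ 2 / 2 + n - 1 := by
  obtain ⟨k, hk⟩ := hn
  have hkk : n = 2 * k := by omega
  have hk0 : 0 < k := by omega
  have hT : m * n ^ 2 / 2 + n - 1 = 2 * (m * k * k) + 2 * k - 1 := by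
    have h1 : m * n ^ 2 = 2 * (m * k * k) * 2 := by subst hkk; ring
    rw [h1, Nat.mul_div_cancel _ (by omega)]
    omega
  obtain ⟨f₀, hrad, hspan⟩ := RB.upper_bound k hm hk0 hkk
  have hmem : 2 * (m * k * k) + 2 * k - 1 ∈
      {s | ∃ f : Fin m × Fin n → ℕ, IsRadioLabeling (bookGraph m n) (n + 1) f ∧ span f = s} :=
    ⟨f₀, hrad, hspan⟩
  rw [rnBook, hT]
  apply le_antisymm
  · exact Nat.sInf_le hmem
  · obtain ⟨f, hf, hsp⟩ := Nat.sInf_mem (⟨_, hmem⟩ : Set.Nonempty _)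
    rw [← hsp]
    exact RB.lower_bound k hm hk0 hkk f hf
end
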